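/- arXiv:0808.2837 — 11 statements merged into one kernel-verified Lean document; each statement's English description precedes it below -/
import Mathlib

section
/- Let C be a group code of length n over a finite Abelian group F of size q ≥ 2, and let τ and ℓ be positive integers such that: (1) (ℓ+1)·τ ≤ n; (2) there is a decoder for C that detects any single τ-burst error; and (3) there is an (ℓ,τ)-burst list decoder for C. Then the redundancy r = n − log_q |C| of C satisfies r ≥ (1 + 1/ℓ)·τ; equivalently, |C|^ℓ · q^{(ℓ+1)τ} ≤ q^{ℓ n}. -/
/-- A word `e ∈ F^n` is a `τ`-burst if its support is contained in `τ`
consecutive positions (equivalently, `e = 0` or the first and last nonzero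
indexes `i ≤ j` satisfy `j - i < τ`). -/
def IsBurst {F : Type*} [Zero F] {n : ℕ} (τ : ℕ) (e : Fin n → F) : Prop :=
  ∃ a : ℕ, ∀ j : Fin n, e j ≠ 0 → a ≤ (j : ℕ) ∧ (j : ℕ) < a + τ

/-- A decoder `D` (returning lists, i.e. finite sets, of codewords) corrects any
single `τ`-burst error. -/
def Corrects {F : Type*} [AddCommGroup F] {n : ℕ}
    (D : (Fin n → F) → Finset (Fin n → F)) (C : Set (Fin n → F)) (τ : ℕ) : Prop :=
  ∀ c ∈ C, ∀ e : Fin n → F, IsBurst τ e → c ∈ D (c + e)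

/-- A decoder `D` detects any single `τ`-burst error: on input `c + e` it
returns `{c}` if `e = 0` and `∅` otherwise. -/
def Detects {F : Type*} [AddCommGroup F] {n : ℕ}
    (D : (Fin n → F) → Finset (Fin n → F)) (C : Set (Fin n → F)) (τ : ℕ) : Prop :=
  ∀ c ∈ C, ∀ e : Fin n → F, IsBurst τ e →
    (e = 0 → D (c + e) = {c}) ∧ (e ≠ 0 → D (c + e) = ∅)

/-- `C` has an `(ℓ,τ)`-burst list decoder: a decoder with lists of codewords of
size at most `ℓ` that corrects any single `τ`-burst error. -/
def HasBurstListDecoder {F : Type*} [AddCommGroup F] {n : ℕ}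
    (C : Set (Fin n → F)) (ℓ τ : ℕ) : Prop :=
  ∃ D : (Fin n → F) → Finset (Fin n → F),
    (∀ y, (D y : Set (Fin n → F)) ⊆ C) ∧ (∀ y, (D y).card ≤ ℓ) ∧ Corrects D C τ

/-- `C` has a decoder detecting any single `τ`-burst error. -/
def HasBurstDetector {F : Type*} [AddCommGroup F] {n : ℕ}
    (C : Set (Fin n → F)) (τ : ℕ) : Prop :=
  ∃ D : (Fin n → F) → Finset (Fin n → F),
    (∀ y, (D y : Set (Fin n → F)) ⊆ C) ∧ Detects D C τ



/-- The embedding of a length-`τ` block at offset `i*τ` into words of length `n`. -/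
private def Eb (F : Type*) [Zero F] (n τ i : ℕ) (b : Fin τ → F) : Fin n → F :=
  fun j => if h : i * τ ≤ (j : ℕ) ∧ (j : ℕ) < i * τ + τ then b ⟨(j : ℕ) - i * τ, by omega⟩ else 0

private lemma Eb_supp {F : Type*} [Zero F] {n τ i : ℕ} {b : Fin τ → F} {j : Fin n}
    (h : Eb F n τ i b j ≠ 0) : i * τ ≤ (j : ℕ) ∧ (j : ℕ) < i * τ + τ := by
  by_contra hc
  exact h (dif_neg hc)

private lemma Eb_burst {F : Type*} [Zero F] {n τ i : ℕ} (b : Fin τ → F) :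
    IsBurst τ (Eb F n τ i b) :=
  ⟨i * τ, fun _ hj => Eb_supp hj⟩

private lemma Eb_sub {F : Type*} [AddCommGroup F] {n τ i : ℕ} (b b' : Fin τ → F) :
    Eb F n τ i b - Eb F n τ i b' = Eb F n τ i (b - b') := by
  funext j
  simp only [Pi.sub_apply, Eb]
  split <;> simp

private lemma Eb_inj {F : Type*} [Zero F] {n τ i : ℕ} (hn : (i + 1) * τ ≤ n)
    {b b' : Fin τ → F} (h : Eb F n τ i b = Eb F n τ i b') : b = b' := by
  funext t
  have h1 : (i + 1) * τ = i * τ + τ := by ring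
  have ht := t.isLt
  have hlt : i * τ + (t : ℕ) < n := by omega
  have hc : i * τ ≤ i * τ + (t : ℕ) ∧ i * τ + (t : ℕ) < i * τ + τ :=
    ⟨Nat.le_add_right _ _, by omega⟩
  have h2 := congrFun h ⟨i * τ + (t : ℕ), hlt⟩
  simp only [Eb] at h2
  rw [dif_pos hc, dif_pos hc] at h2
  simpa using h2

private lemma interval_disj {τ i i' m : ℕ} (hne : i ≠ i')
    (h1 : i * τ ≤ m) (h2 : m < i * τ + τ) (h3 : i' * τ ≤ m) (h4 : m < i' * τ + τ) : False := by
  rcases Nat.lt_or_ge i i' with h | h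
  · have h0 : (i + 1) * τ ≤ i' * τ := Nat.mul_le_mul_right τ (by omega)
    have h5 : (i + 1) * τ = i * τ + τ := by ring
    linarith
  · have hlt : i' < i := lt_of_le_of_ne h (Ne.symm hne)
    have h0 : (i' + 1) * τ ≤ i * τ := Nat.mul_le_mul_right τ (by omega)
    have h5 : (i' + 1) * τ = i' * τ + τ := by ring
    linarith

/-- The encoding map used in the proof of the generalized Reiger bound. -/
private def phi {F : Type*} [AddCommGroup F] {n : ℕ} (τ : ℕ) {ℓ : ℕ}
    (c : Fin ℓ → Fin n → F) (b : Fin (ℓ + 1) → Fin τ → F) : Fin ℓ → Fin n → F :=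
  fun k => c k + Eb F n τ (k : ℕ) (b ⟨(k : ℕ), Nat.lt_succ_of_lt k.isLt⟩)
    + Eb F n τ ((k : ℕ) + 1) (b ⟨(k : ℕ) + 1, Nat.succ_lt_succ k.isLt⟩)

private def delta (F : Type*) [AddCommGroup F] (n τ : ℕ) {L : ℕ}
    (b b' : Fin L → Fin τ → F) (i : Fin L) : Fin n → F :=
  Eb F n τ (i : ℕ) (b i) - Eb F n τ (i : ℕ) (b' i)

private lemma delta_burst {F : Type*} [AddCommGroup F] {n τ L : ℕ}
    (b b' : Fin L → Fin τ → F) (i : Fin L) : IsBurst τ (delta F n τ b b' i) := by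
  unfold delta
  rw [Eb_sub]
  exact Eb_burst _

private lemma delta_supp {F : Type*} [AddCommGroup F] {n τ L : ℕ}
    {b b' : Fin L → Fin τ → F} {i : Fin L} {m : Fin n}
    (h : delta F n τ b b' i m ≠ 0) : (i : ℕ) * τ ≤ (m : ℕ) ∧ (m : ℕ) < (i : ℕ) * τ + τ := by
  have he : delta F n τ b b' i = Eb F n τ (i : ℕ) (b i - b' i) := by
    unfold delta; exact Eb_sub _ _
  rw [he] at h
  exact Eb_supp h

private lemma isBurst_zsmul {F : Type*} [AddCommGroup F] {n τ : ℕ} {x : Fin n → F}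
    (z : ℤ) (h : IsBurst τ x) : IsBurst τ (z • x) := by
  obtain ⟨a, ha⟩ := h
  exact ⟨a, fun j hj => ha j (fun h0 => hj (by simp [h0]))⟩

private lemma negonepow_smul_eq_zero {M : Type*} [AddCommGroup M] {m : ℕ} {x : M}
    (h : ((-1 : ℤ)) ^ m • x = 0) : x = 0 := by
  rcases neg_one_pow_eq_or ℤ m with h1 | h1 <;> rw [h1] at h
  · simpa using h
  · simpa using h


/-- generalized Reiger bound for group codes.
If a group code `C` of length `n` over a finite Abelian group of size `q ≥ 2`
satisfies `(ℓ+1)τ ≤ n`, has a decoder detecting any single `τ`-burst error and an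
`(ℓ,τ)`-burst list decoder, then its redundancy `r = n - log_q |C|` satisfies
`r ≥ (1 + 1/ℓ)·τ`, i.e. `|C|^ℓ · q^{(ℓ+1)τ} ≤ q^{ℓn}`. -/
theorem generalized_Reiger_group (F : Type*) [AddCommGroup F] [Fintype F]
    (n τ ℓ : ℕ) (hq : 2 ≤ Fintype.card F) (hτ : 1 ≤ τ) (hℓ : 1 ≤ ℓ)
    (C : AddSubgroup (Fin n → F))
    (h1 : (ℓ + 1) * τ ≤ n)
    (h2 : HasBurstDetector (C : Set (Fin n → F)) τ)
    (h3 : HasBurstListDecoder (C : Set (Fin n → F)) ℓ τ) :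
    Nat.card C ^ ℓ * Fintype.card F ^ ((ℓ + 1) * τ) ≤ Fintype.card F ^ (ℓ * n) := by
  classical
  obtain ⟨D, hDsub, hDcard, hDcorr⟩ := h3
  obtain ⟨D', hD'sub, hD'det⟩ := h2
  have hburst0 : IsBurst τ (0 : Fin n → F) := ⟨0, fun j hj => absurd rfl hj⟩
  -- from the detector: no nonzero codeword is a `τ`-burst
  have hdet : ∀ x ∈ C, IsBurst τ x → x = 0 := by
    intro x hx hb
    by_contra hne
    have ha := (hD'det 0 (zero_mem C) x hb).2 hne
    have hb2 := (hD'det x hx 0 hburst0).1 rfl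
    rw [zero_add] at ha
    rw [add_zero] at hb2
    rw [ha] at hb2
    exact (Finset.singleton_ne_empty x) hb2.symm
  -- the key injectivity statement
  have main : ∀ (c c' : Fin ℓ → Fin n → F) (b b' : Fin (ℓ + 1) → Fin τ → F),
      (∀ k, c k ∈ C) → (∀ k, c' k ∈ C) → phi τ c b = phi τ c' b' →
      c = c' ∧ b = b' := by
    intro c c' b b' hc hc' heq
    set δ := delta F n τ b b' with hδ
    have hrel : ∀ k : Fin ℓ,
        c k - c' k = -(δ ⟨(k : ℕ), Nat.lt_succ_of_lt k.isLt⟩)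
          - δ ⟨(k : ℕ) + 1, Nat.succ_lt_succ k.isLt⟩ := by
      intro k
      have h' := congrFun heq k
      simp only [phi] at h'
      have ha := eq_sub_of_add_eq (eq_sub_of_add_eq h')
      rw [hδ]
      simp only [delta]
      rw [ha]
      abel
    have hWmem : ∀ m, ∀ hm : m < ℓ + 1,
        δ 0 - ((-1 : ℤ)) ^ m • δ ⟨m, hm⟩ ∈ C := by
      intro m
      induction m with
      | zero =>
        intro hm
        have : δ 0 - ((-1 : ℤ)) ^ 0 • δ ⟨0, hm⟩ = 0 := by
          simp
        rw [this]
        exact zero_mem C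
      | succ m ih =>
        intro hm
        have hm' : m < ℓ + 1 := by omega
        have hkℓ : m < ℓ := by omega
        have hr := hrel ⟨m, hkℓ⟩
        have hid : δ 0 - ((-1 : ℤ)) ^ (m + 1) • δ ⟨m + 1, hm⟩
            = (δ 0 - ((-1 : ℤ)) ^ m • δ ⟨m, hm'⟩)
              + ((-1 : ℤ)) ^ (m + 1) • (c ⟨m, hkℓ⟩ - c' ⟨m, hkℓ⟩) := by
          rw [hr, pow_succ]
          simp only [mul_smul, smul_sub, smul_add, smul_neg, neg_one_smul, sub_neg_eq_add,
            neg_sub, neg_neg]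
          abel
        rw [hid]
        exact add_mem (ih hm') (zsmul_mem (sub_mem (hc _) (hc' _)) _)
    have hδburst : ∀ i : Fin (ℓ + 1), IsBurst τ (δ i) := fun i => delta_burst b b' i
    have hWD : ∀ i : Fin (ℓ + 1), δ 0 - ((-1 : ℤ)) ^ (i : ℕ) • δ i ∈ D (δ 0) := by
      intro i
      have hm := hWmem (i : ℕ) i.isLt
      have hC : δ 0 - ((-1 : ℤ)) ^ (i : ℕ) • δ i ∈ C := hm
      have := hDcorr _ hC (((-1 : ℤ)) ^ (i : ℕ) • δ i) (isBurst_zsmul _ (hδburst i))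
      rwa [sub_add_cancel] at this
    have hcard : Fintype.card (↥(D (δ 0))) < Fintype.card (Fin (ℓ + 1)) := by
      rw [Fintype.card_coe, Fintype.card_fin]
      exact lt_of_le_of_lt (hDcard _) (Nat.lt_succ_self ℓ)
    obtain ⟨i, j, hij, hWij⟩ := Fintype.exists_ne_map_eq_of_card_lt
      (fun i : Fin (ℓ + 1) =>
        (⟨δ 0 - ((-1 : ℤ)) ^ (i : ℕ) • δ i, hWD i⟩ : ↥(D (δ 0)))) hcard
    have hval : δ 0 - ((-1 : ℤ)) ^ (i : ℕ) • δ i = δ 0 - ((-1 : ℤ)) ^ (j : ℕ) • δ j :=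
      congrArg Subtype.val hWij
    have hz : ((-1 : ℤ)) ^ (i : ℕ) • δ i = ((-1 : ℤ)) ^ (j : ℕ) • δ j :=
      sub_right_inj.mp hval
    have hz0 : ((-1 : ℤ)) ^ (i : ℕ) • δ i = 0 := by
      funext m
      by_cases hδi : δ i m = 0
      · simp [hδi]
      · by_cases hδj : δ j m = 0
        · rw [hz]
          simp [hδj]
        · exfalso
          have hne : (i : ℕ) ≠ (j : ℕ) := fun hh => hij (Fin.ext hh)
          have s1 := delta_supp (b := b) (b' := b') (i := i) (m := m) hδi
          have s2 := delta_supp (b := b) (b' := b') (i := j) (m := m) hδj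
          exact interval_disj hne s1.1 s1.2 s2.1 s2.2
    have hδi0 : δ i = 0 := negonepow_smul_eq_zero hz0
    have hδ0C : δ 0 ∈ C := by
      have hm := hWmem (i : ℕ) i.isLt
      have : δ 0 - ((-1 : ℤ)) ^ (i : ℕ) • δ i ∈ C := hm
      rw [hδi0] at this
      simpa using this
    have hδ00 : δ 0 = 0 := hdet _ hδ0C (hδburst 0)
    have hδall : ∀ i' : Fin (ℓ + 1), δ i' = 0 := by
      intro i'
      apply negonepow_smul_eq_zero (m := (i' : ℕ))
      apply hdet _ _ (isBurst_zsmul _ (hδburst i'))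
      have hm : δ 0 - ((-1 : ℤ)) ^ (i' : ℕ) • δ i' ∈ C := hWmem (i' : ℕ) i'.isLt
      rw [hδ00, zero_sub] at hm
      simpa using neg_mem hm
    constructor
    · funext k
      have hr := hrel k
      rw [hδall, hδall] at hr
      simp only [neg_zero, sub_zero] at hr
      exact sub_eq_zero.mp hr
    · funext i'
      have h0 : δ i' = 0 := hδall i'
      rw [hδ] at h0
      unfold delta at h0
      have heb : Eb F n τ (i' : ℕ) (b i') = Eb F n τ (i' : ℕ) (b' i') := sub_eq_zero.mp h0
      have hn' : ((i' : ℕ) + 1) * τ ≤ n :=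
        le_trans (Nat.mul_le_mul_right τ i'.isLt) h1
      exact Eb_inj hn' heb
  -- counting
  haveI : Fintype ↥C := Fintype.ofFinite _
  have hinj : Function.Injective
      (fun p : (Fin ℓ → ↥C) × (Fin (ℓ + 1) → Fin τ → F) =>
        phi τ (fun k => ((p.1 k : Fin n → F))) p.2) := by
    intro p p' h
    obtain ⟨hcc, hbb⟩ := main _ _ _ _ (fun k => (p.1 k).2) (fun k => (p'.1 k).2) h
    have h1' : p.1 = p'.1 := funext fun k => Subtype.ext (congrFun hcc k)
    exact Prod.ext h1' hbb
  have hcard := Fintype.card_le_of_injective _ hinj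
  simp only [Fintype.card_prod, Fintype.card_fun, Fintype.card_fin, Fintype.card_pi] at hcard
  rw [Nat.card_eq_fintype_card]
  calc Fintype.card ↥C ^ ℓ * Fintype.card F ^ ((ℓ + 1) * τ)
      = Fintype.card ↥C ^ ℓ * (Fintype.card F ^ τ) ^ (ℓ + 1) := by
        rw [← pow_mul, mul_comm τ (ℓ + 1)]
    _ ≤ (Fintype.card F ^ n) ^ ℓ := by
        convert hcard using 2 <;> simp [Fintype.card_fun]
    _ = Fintype.card F ^ (ℓ * n) := by rw [← pow_mul, mul_comm n ℓ]
end

section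
/- Let C be a group code of length n over a finite Abelian group F of size q ≥ 2, let τ, ℓ be positive integers with (ℓ+1)·τ ≤ n, and let J_0, J_1, …, J_ℓ be any ℓ+1 pairwise disjoint sets, each consisting of τ consecutive elements of {0, 1, …, n−1}. Suppose that: (a) no nonzero codeword of C has its support contained in some J_i; and (b) there do not exist ℓ+1 distinct pairs (c_i, e_i), 0 ≤ i ≤ ℓ, where each c_i ∈ C, each e_i ∈ F^n has support contained in one of the sets J_0, …, J_ℓ, and c_0+e_0 = c_1+e_1 = ⋯ = c_ℓ+e_ℓ. Then the redundancy r = n − log_q |C| satisfies r ≥ (1 + 1/ℓ)·τ. In particular, the generalized Reiger bound for group codes holds even when the burst errors are restricted a priori to be phased, i.e., to have support contained in one of the sets J_i = {j : iτ ≤ j < (i+1)τ}. -/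
lemma aux_card_supported {F : Type*} [Fintype F] [Zero F] {n : ℕ} (s : Set (Fin n)) :
    Nat.card {e : Fin n → F // ∀ j, e j ≠ 0 → j ∈ s} = Fintype.card F ^ Nat.card s := by
  classical
  have E : {e : Fin n → F // ∀ j, e j ≠ 0 → j ∈ s} ≃ (s → F) :=
  { toFun := fun e j => e.1 j
    invFun := fun f => ⟨fun j => if h : j ∈ s then f ⟨j, h⟩ else 0, fun j hj => by
      by_contra h
      simp [h] at hj⟩
    left_inv := fun e => by
      ext j
      by_cases h : j ∈ s
      · simp [h]
      · simp only [h, dif_neg, not_false_iff]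
        by_contra hne
        exact h (e.2 j fun h0 => hne h0.symm)
    right_inv := fun f => by
      ext j
      simp [j.2] }
  rw [Nat.card_congr E, Nat.card_fun, Nat.card_eq_fintype_card]

lemma aux_card_interval {n τ a : ℕ} (h : a + τ ≤ n) :
    Nat.card {j : Fin n | a ≤ (j : ℕ) ∧ (j : ℕ) < a + τ} = τ := by
  have E : {j : Fin n | a ≤ (j : ℕ) ∧ (j : ℕ) < a + τ} ≃ Fin τ :=
  { toFun := fun j => ⟨(j.1 : ℕ) - a, by
      have h2 := j.2
      simp only [Set.mem_setOf_eq] at h2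
      omega⟩
    invFun := fun k => ⟨⟨a + k.1, by omega⟩, by
      simp only [Set.mem_setOf_eq]
      omega⟩
    left_inv := fun j => by
      have h2 := j.2
      simp only [Set.mem_setOf_eq] at h2
      apply Subtype.ext
      apply Fin.ext
      simp
      omega
    right_inv := fun k => by
      apply Fin.ext
      simp }
  rw [Nat.card_congr E, Nat.card_eq_fintype_card, Fintype.card_fin]


/-- generalized Reiger bound for group codes, phased bursts.
Let `C` be a group code of length `n` over a finite Abelian group of size
`q ≥ 2`, let `(ℓ+1)τ ≤ n`, and let `J_0, …, J_ℓ` be pairwise disjoint sets each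
consisting of `τ` consecutive elements of `{0,…,n-1}`. If (a) no nonzero
codeword has support contained in some `J_i`, and (b) there are no `ℓ+1`
distinct pairs `(c_i, e_i)` of codewords `c_i` and words `e_i` supported in one
of the sets `J_0, …, J_ℓ` with all sums `c_i + e_i` equal, then
`|C|^ℓ · q^{(ℓ+1)τ} ≤ q^{ℓn}`, i.e. the redundancy satisfies `r ≥ (1 + 1/ℓ)·τ`.
In particular the bound holds for phased bursts, `J_i = {j : iτ ≤ j < (i+1)τ}`. -/
theorem generalized_Reiger_group_phased (F : Type*) [AddCommGroup F] [Fintype F]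
    (n τ ℓ : ℕ) (hq : 2 ≤ Fintype.card F) (hτ : 1 ≤ τ) (hℓ : 1 ≤ ℓ)
    (C : AddSubgroup (Fin n → F))
    (h1 : (ℓ + 1) * τ ≤ n)
    (J : Fin (ℓ + 1) → Set (Fin n))
    (hdisj : ∀ i k, i ≠ k → Disjoint (J i) (J k))
    (hcons : ∀ i, ∃ a : ℕ, a + τ ≤ n ∧
      J i = {j : Fin n | a ≤ (j : ℕ) ∧ (j : ℕ) < a + τ})
    (ha : ∀ c ∈ C, (∃ i, ∀ j, c j ≠ 0 → j ∈ J i) → c = 0)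
    (hb : ¬ ∃ (c e : Fin (ℓ + 1) → (Fin n → F)),
      (∀ i, c i ∈ C) ∧
      (∀ i, ∃ k, ∀ j, e i j ≠ 0 → j ∈ J k) ∧
      Function.Injective (fun i => (c i, e i)) ∧
      ∀ i k, c i + e i = c k + e k) :
    Nat.card C ^ ℓ * Fintype.card F ^ ((ℓ + 1) * τ) ≤ Fintype.card F ^ (ℓ * n) := by
  classical
  -- supported words
  set E : Fin (ℓ + 1) → Type _ := fun i => {e : Fin n → F // ∀ j, e j ≠ 0 → j ∈ J i} with hE
  -- helper: a word supported in two distinct J's is zero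
  have hdz : ∀ (i k : Fin (ℓ + 1)), i ≠ k → ∀ (x : Fin n → F),
      (∀ j, x j ≠ 0 → j ∈ J i) → (∀ j, x j ≠ 0 → j ∈ J k) → x = 0 := by
    intro i k hik x hxi hxk
    funext j
    by_contra hj
    exact (Set.disjoint_left.mp (hdisj i k hik)) (hxi j hj) (hxk j hj)
  -- support of a difference
  have hsub : ∀ (k : Fin (ℓ + 1)) (x y : Fin n → F),
      (∀ j, x j ≠ 0 → j ∈ J k) → (∀ j, y j ≠ 0 → j ∈ J k) →
      ∀ j, (x - y) j ≠ 0 → j ∈ J k := by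
    intro k x y hx hy j hj
    by_cases h1 : x j = 0
    · apply hy j
      intro h2
      exact hj (by simp [Pi.sub_apply, h1, h2])
    · exact hx j h1
  -- The injection
  let Φ : (Fin ℓ → C) × (∀ i : Fin (ℓ + 1), E i) → (Fin ℓ → (Fin n → F)) :=
    fun p i => (p.1 i : Fin n → F) + (p.2 0 : Fin n → F) + (p.2 i.succ : Fin n → F)
  have hΦ : Function.Injective Φ := by
    rintro ⟨c1, e1⟩ ⟨c2, e2⟩ h
    have key : ∀ i : Fin ℓ, (c1 i : Fin n → F) - (c2 i : Fin n → F) =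
        (((e2 0 : E 0) : Fin n → F) - ((e1 0 : E 0) : Fin n → F)) +
        (((e2 i.succ : E i.succ) : Fin n → F) - ((e1 i.succ : E i.succ) : Fin n → F)) := by
      intro i
      have hi : (c1 i : Fin n → F) + ((e1 0 : E 0) : Fin n → F) + ((e1 i.succ : E i.succ) : Fin n → F)
          = (c2 i : Fin n → F) + ((e2 0 : E 0) : Fin n → F) + ((e2 i.succ : E i.succ) : Fin n → F) :=
        congrFun h i
      rw [← sub_eq_zero]
      have hz := sub_eq_zero.mpr hi
      calc (c1 i : Fin n → F) - (c2 i : Fin n → F) -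
            ((((e2 0 : E 0) : Fin n → F) - ((e1 0 : E 0) : Fin n → F)) +
             (((e2 i.succ : E i.succ) : Fin n → F) - ((e1 i.succ : E i.succ) : Fin n → F)))
          = ((c1 i : Fin n → F) + ((e1 0 : E 0) : Fin n → F) + ((e1 i.succ : E i.succ) : Fin n → F)) -
            ((c2 i : Fin n → F) + ((e2 0 : E 0) : Fin n → F) + ((e2 i.succ : E i.succ) : Fin n → F)) := by
            abel
        _ = 0 := hz
    -- notation
    set f0 : Fin n → F := ((e2 0 : E 0) : Fin n → F) - ((e1 0 : E 0) : Fin n → F) with hf0def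
    have hf0supp : ∀ j, f0 j ≠ 0 → j ∈ J 0 := hsub 0 _ _ (e2 0).2 (e1 0).2
    have hfisupp : ∀ i : Fin ℓ, ∀ j,
        (((e2 i.succ : E i.succ) : Fin n → F) - ((e1 i.succ : E i.succ) : Fin n → F)) j ≠ 0 →
        j ∈ J i.succ := fun i => hsub i.succ _ _ (e2 i.succ).2 (e1 i.succ).2
    -- build the family of ℓ+1 pairs
    let cc : Fin (ℓ + 1) → (Fin n → F) :=
      Fin.cases 0 (fun i => (c1 i : Fin n → F) - (c2 i : Fin n → F))
    let ee : Fin (ℓ + 1) → (Fin n → F) :=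
      Fin.cases f0 (fun i => -(((e2 i.succ : E i.succ) : Fin n → F) - ((e1 i.succ : E i.succ) : Fin n → F)))
    have hccmem : ∀ i, cc i ∈ C := by
      intro i
      induction i using Fin.cases with
      | zero => simpa [cc] using C.zero_mem
      | succ i => simpa [cc] using C.sub_mem (c1 i).2 (c2 i).2
    have heesupp : ∀ i, ∃ k, ∀ j, ee i j ≠ 0 → j ∈ J k := by
      intro i
      induction i using Fin.cases with
      | zero => exact ⟨0, by simpa [ee] using hf0supp⟩
      | succ i =>
        refine ⟨i.succ, fun j hj => hfisupp i j ?_⟩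
        simp only [ee, Fin.cases_succ, Pi.neg_apply, ne_eq, neg_eq_zero] at hj
        exact hj
    have hsums : ∀ i k, cc i + ee i = cc k + ee k := by
      have hall : ∀ i, cc i + ee i = f0 := by
        intro i
        induction i using Fin.cases with
        | zero => simp [cc, ee]
        | succ i =>
          simp only [cc, ee, Fin.cases_succ]
          rw [key i]
          abel
      intro i k
      rw [hall i, hall k]
    have hni : ¬ Function.Injective (fun i => (cc i, ee i)) := by
      intro hinj
      exact hb ⟨cc, ee, hccmem, heesupp, hinj, hsums⟩
    rw [Function.not_injective_iff] at hni
    obtain ⟨a, b, hab, hne⟩ := hni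
    simp only [Prod.mk.injEq] at hab
    -- derive f0 = 0
    have hf0 : f0 = 0 := by
      induction a using Fin.cases with
      | zero =>
        induction b using Fin.cases with
        | zero => exact absurd rfl hne
        | succ b =>
          have h2 : ee 0 = ee b.succ := hab.2
          simp only [ee, Fin.cases_zero, Fin.cases_succ] at h2
          refine hdz 0 b.succ (Fin.succ_ne_zero b).symm f0 hf0supp fun j hj => ?_
          apply hfisupp b j
          intro h0
          apply hj
          rw [h2, Pi.neg_apply, h0, neg_zero]
      | succ a =>
        induction b using Fin.cases with
        | zero =>
          have h2 : ee a.succ = ee 0 := hab.2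
          simp only [ee, Fin.cases_zero, Fin.cases_succ] at h2
          refine hdz 0 a.succ (Fin.succ_ne_zero a).symm f0 hf0supp fun j hj => ?_
          apply hfisupp a j
          intro h0
          apply hj
          rw [← h2, Pi.neg_apply, h0, neg_zero]
        | succ b =>
          have hab' : a ≠ b := fun h => hne (by rw [h])
          have h2 : ee a.succ = ee b.succ := hab.2
          simp only [ee, Fin.cases_succ, neg_inj] at h2
          have hfa : ((e2 a.succ : E a.succ) : Fin n → F) - ((e1 a.succ : E a.succ) : Fin n → F) = 0 := by
            refine hdz a.succ b.succ (fun h => hab' (Fin.succ_injective ℓ h)) _ (hfisupp a) ?_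
            intro j hj
            rw [h2] at hj
            exact hfisupp b j hj
          have hda : (c1 a : Fin n → F) - (c2 a : Fin n → F) = f0 := by
            rw [key a, hfa, add_zero]
          have : (c1 a : Fin n → F) - (c2 a : Fin n → F) = 0 :=
            ha _ (C.sub_mem (c1 a).2 (c2 a).2) ⟨0, by rw [hda]; exact hf0supp⟩
          rw [← hda, this]
    -- conclude everything is zero
    have hfi : ∀ i : Fin ℓ,
        ((e2 i.succ : E i.succ) : Fin n → F) - ((e1 i.succ : E i.succ) : Fin n → F) = 0 := by
      intro i
      have hdi : (c1 i : Fin n → F) - (c2 i : Fin n → F) =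
          ((e2 i.succ : E i.succ) : Fin n → F) - ((e1 i.succ : E i.succ) : Fin n → F) := by
        rw [key i, hf0, zero_add]
      have hz : (c1 i : Fin n → F) - (c2 i : Fin n → F) = 0 :=
        ha _ (C.sub_mem (c1 i).2 (c2 i).2) ⟨i.succ, by rw [hdi]; exact hfisupp i⟩
      rw [← hdi, hz]
    have hc12 : c1 = c2 := by
      funext i
      have hz : (c1 i : Fin n → F) - (c2 i : Fin n → F) = 0 := by
        rw [key i, hf0, hfi i, zero_add]
      exact Subtype.ext (sub_eq_zero.mp hz)
    have he12 : e1 = e2 := by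
      funext k
      induction k using Fin.cases with
      | zero => exact Subtype.ext (sub_eq_zero.mp hf0).symm
      | succ k => exact Subtype.ext (sub_eq_zero.mp (hfi k)).symm
    rw [hc12, he12]
  -- cardinality bookkeeping
  have hcard := Nat.card_le_card_of_injective Φ hΦ
  have hdom : Nat.card ((Fin ℓ → C) × (∀ i : Fin (ℓ + 1), E i)) =
      Nat.card C ^ ℓ * Fintype.card F ^ ((ℓ + 1) * τ) := by
    rw [Nat.card_prod, Nat.card_fun, Nat.card_eq_fintype_card (α := Fin ℓ), Fintype.card_fin,
      Nat.card_pi]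
    congr 1
    have hEi : ∀ i, Nat.card (E i) = Fintype.card F ^ τ := by
      intro i
      obtain ⟨a, han, hJ⟩ := hcons i
      rw [hE]
      simp only [hJ]
      rw [aux_card_supported, aux_card_interval han]
    calc (∏ i : Fin (ℓ + 1), Nat.card (E i)) = ∏ _i : Fin (ℓ + 1), Fintype.card F ^ τ := by
          exact Finset.prod_congr rfl fun i _ => hEi i
      _ = (Fintype.card F ^ τ) ^ (ℓ + 1) := by
          rw [Finset.prod_const, Finset.card_univ, Fintype.card_fin]
      _ = Fintype.card F ^ ((ℓ + 1) * τ) := by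
          rw [← pow_mul, mul_comm]
  have hcod : Nat.card (Fin ℓ → (Fin n → F)) = Fintype.card F ^ (ℓ * n) := by
    rw [Nat.card_fun, Nat.card_eq_fintype_card (α := Fin ℓ), Fintype.card_fin,
      Nat.card_fun, Nat.card_eq_fintype_card (α := Fin n), Fintype.card_fin,
      Nat.card_eq_fintype_card, ← pow_mul, mul_comm]
  rw [hdom, hcod] at hcard
  exact hcard
end

section
/- Let C be a linear code over the field F = GF(q) and let ℓ, τ be positive integers with ℓ < q. If there is an (ℓ,τ)-burst list decoder for C, then there is a decoder for C that detects any single τ-burst error; equivalently, if no ℓ+1 distinct τ-bursts in F^n lie in the same coset of C, then no nonzero codeword of C is a τ-burst. -/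
/-- For a linear code `C` over `F = GF(q)` and `ℓ < q`, burst
list decodability implies burst detectability: if no `ℓ+1` distinct `τ`-bursts
lie in the same coset of `C`, then no nonzero codeword of `C` is a `τ`-burst. -/
theorem listDecoder_implies_detector (F : Type*) [Field F] [Fintype F]
    (n τ ℓ : ℕ) (hτ : 1 ≤ τ) (hℓ : 1 ≤ ℓ) (hℓq : ℓ < Fintype.card F)
    (C : Submodule F (Fin n → F))
    (h : ¬ ∃ e : Fin (ℓ + 1) → (Fin n → F), Function.Injective e ∧
        (∀ i, IsBurst τ (e i)) ∧ ∀ i j, e i - e j ∈ C) :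
    ∀ c ∈ C, IsBurst τ c → c = 0 := by
  intro c hcC hburst
  by_contra hc
  apply h
  have hcard : Fintype.card (Fin (ℓ + 1)) ≤ Fintype.card F := by
    simpa using hℓq
  obtain ⟨f⟩ := Function.Embedding.nonempty_of_card_le hcard
  refine ⟨fun i => f i • c, ?_, ?_, ?_⟩
  · intro i j hij
    apply f.injective
    by_contra hne
    have hij' : f i • c = f j • c := hij
    have : (f i - f j) • c = 0 := by rw [sub_smul, hij', sub_self]
    rcases smul_eq_zero.mp this with h1 | h2
    · exact hne (sub_eq_zero.mp h1)
    · exact hc h2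
  · intro i
    obtain ⟨a, ha⟩ := hburst
    exact ⟨a, fun j hj => ha j (by simpa using fun h0 => hj (by simp [h0]))⟩
  · intro i j
    show f i • c - f j • c ∈ C
    rw [← sub_smul]
    exact C.smul_mem _ hcC
end

section
/- Let C be a group code of length n over a finite Abelian group F of size q ≥ 2, and let τ and ℓ be positive integers such that: (1) ℓ divides τ and 2τ ≤ n; (2) there is a decoder for C that detects any single τ-burst error; and (3) there is an (ℓ,τ)-burst list decoder for C. Then the redundancy r = n − log_q |C| of C satisfies r ≥ (1 + 1/ℓ)·τ; equivalently, |C|^ℓ · q^{(ℓ+1)τ} ≤ q^{ℓ n}. -/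
/-- generalized Reiger bound for group codes, relaxed length
condition. If a group code `C` of length `n` over a finite Abelian group of
size `q ≥ 2` satisfies `ℓ ∣ τ` and `2τ ≤ n`, has a decoder detecting any single
`τ`-burst error and an `(ℓ,τ)`-burst list decoder, then its redundancy
`r = n - log_q |C|` satisfies `r ≥ (1 + 1/ℓ)·τ`, i.e.
`|C|^ℓ · q^{(ℓ+1)τ} ≤ q^{ℓn}`. -/
theorem generalized_Reiger_group_relaxed (F : Type*) [AddCommGroup F] [Fintype F]
    (n τ ℓ : ℕ) (hq : 2 ≤ Fintype.card F) (hτ : 1 ≤ τ) (hℓ : 1 ≤ ℓ)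
    (C : AddSubgroup (Fin n → F))
    (h1a : ℓ ∣ τ) (h1b : 2 * τ ≤ n)
    (h2 : HasBurstDetector (C : Set (Fin n → F)) τ)
    (h3 : HasBurstListDecoder (C : Set (Fin n → F)) ℓ τ) :
    Nat.card C ^ ℓ * Fintype.card F ^ ((ℓ + 1) * τ) ≤ Fintype.card F ^ (ℓ * n) := by
  classical
  obtain ⟨s, hs⟩ := h1a
  set q := Fintype.card F with hqdef
  have hs1 : 1 ≤ s := by
    rcases Nat.eq_zero_or_pos s with h | h
    · rw [h, Nat.mul_zero] at hs; omega
    · exact h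
  have hsτ : s ≤ τ := by
    calc s = 1 * s := (one_mul s).symm
    _ ≤ ℓ * s := mul_le_mul_left hℓ s
    _ = τ := hs.symm
  have hτs : τ + s ≤ n := by omega
  have hn0 : 0 < n := by omega
  -- detection: no nonzero codeword is a τ-burst
  have hnb : ∀ c : Fin n → F, c ∈ C → c ≠ 0 → ¬ IsBurst τ c := by
    intro c hc hc0 hb
    obtain ⟨D, _, hDdet⟩ := h2
    have hz : IsBurst τ (0 : Fin n → F) := ⟨0, fun j hj => absurd rfl hj⟩
    have hA := (hDdet 0 (zero_mem C) c hb).2 hc0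
    have hB := (hDdet c hc 0 hz).1 rfl
    rw [zero_add] at hA
    rw [add_zero] at hB
    rw [hA] at hB
    exact Finset.singleton_ne_empty c hB.symm
  -- key cardinality bound
  have hCle : Nat.card C ≤ q ^ (n - (τ + s)) := by
    by_contra hlt
    push_neg at hlt
    haveI : Fintype ↥C := Fintype.ofFinite _
    -- pigeonhole: for each k < ℓ a nonzero codeword supported on [k*s, k*s+τ+s)
    have key : ∀ k : ℕ, k < ℓ → ∃ gk : Fin n → F, gk ∈ C ∧ gk ≠ 0 ∧
        ∀ j : Fin n, gk j ≠ 0 → k * s ≤ (j : ℕ) ∧ (j : ℕ) < k * s + τ + s := by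
      intro k hk
      have hwin : k * s + τ + s ≤ n := by
        have h1 : k * s + s ≤ ℓ * s := by
          calc k * s + s = (k + 1) * s := by ring
          _ ≤ ℓ * s := mul_le_mul_left hk s
        omega
      set T : Finset (Fin n) :=
        Finset.univ.filter (fun j : Fin n => (j : ℕ) < k * s ∨ k * s + τ + s ≤ (j : ℕ)) with hT
      set Tc : Finset (Fin n) :=
        Finset.univ.filter (fun j : Fin n => k * s ≤ (j : ℕ) ∧ (j : ℕ) < k * s + τ + s) with hTc
      have hdisj : Disjoint T Tc := by
        rw [Finset.disjoint_left]
        intro a ha ha'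
        rw [hT, Finset.mem_filter] at ha
        rw [hTc, Finset.mem_filter] at ha'
        omega
      have hTTc : T.card + Tc.card ≤ n := by
        have h1 := Finset.card_union_of_disjoint hdisj
        have h2' := Finset.card_le_card (Finset.subset_univ (T ∪ Tc))
        rw [h1] at h2'
        simpa using h2'
      have hTc2 : τ + s ≤ Tc.card := by
        have hmaps : ∀ i ∈ Finset.range (τ + s),
            (⟨(k * s + i) % n, Nat.mod_lt _ hn0⟩ : Fin n) ∈ Tc := by
          intro i hi
          rw [Finset.mem_range] at hi
          have hlt2 : k * s + i < n := by omega
          rw [hTc, Finset.mem_filter]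
          refine ⟨Finset.mem_univ _, ?_⟩
          show k * s ≤ (k * s + i) % n ∧ (k * s + i) % n < k * s + τ + s
          rw [Nat.mod_eq_of_lt hlt2]
          omega
        have hinj : Set.InjOn (fun i : ℕ => (⟨(k * s + i) % n, Nat.mod_lt _ hn0⟩ : Fin n))
            ↑(Finset.range (τ + s)) := by
          intro i1 h1 i2 h2' he
          simp only [Finset.coe_range, Set.mem_Iio] at h1 h2'
          have hv := congrArg Fin.val he
          simp only at hv
          rw [Nat.mod_eq_of_lt (by omega), Nat.mod_eq_of_lt (by omega)] at hv
          omega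
        have := Finset.card_le_card_of_injOn _ hmaps hinj
        simpa using this
      have hTcard : T.card ≤ n - (τ + s) := by omega
      have e1 : Fintype.card (↥T → F) = q ^ T.card := by
        rw [Fintype.card_fun, Fintype.card_coe]
      have e2 : q ^ T.card ≤ q ^ (n - (τ + s)) := Nat.pow_le_pow_right (by omega) hTcard
      have hcard : Fintype.card (↥T → F) < Fintype.card ↥C := by
        rw [← Nat.card_eq_fintype_card (α := ↥C)]
        calc Fintype.card (↥T → F) = q ^ T.card := e1
          _ ≤ q ^ (n - (τ + s)) := e2
          _ < Nat.card ↥C := hlt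
      obtain ⟨c1, c2, hne, heq⟩ := Fintype.exists_ne_map_eq_of_card_lt
        (fun c : ↥C => (fun j : ↥T => (c : Fin n → F) (j : Fin n))) hcard
      refine ⟨(c1 : Fin n → F) - (c2 : Fin n → F), sub_mem c1.2 c2.2, ?_, ?_⟩
      · intro h0
        exact hne (Subtype.ext (sub_eq_zero.mp h0))
      · intro j hj
        by_contra hcon
        have hjT : j ∈ T := by
          rw [hT, Finset.mem_filter]
          exact ⟨Finset.mem_univ _, by omega⟩
        have hfun := congrFun heq ⟨j, hjT⟩
        simp only at hfun
        apply hj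
        show (c1 : Fin n → F) j - (c2 : Fin n → F) j = 0
        rw [hfun, sub_self]
    -- totalize and choose
    have key' : ∀ k : ℕ, ∃ gk : Fin n → F, gk ∈ C ∧ (k < ℓ → gk ≠ 0 ∧
        ∀ j : Fin n, gk j ≠ 0 → k * s ≤ (j : ℕ) ∧ (j : ℕ) < k * s + τ + s) := by
      intro k
      by_cases hk : k < ℓ
      · obtain ⟨gk, hh1, hh2, hh3⟩ := key k hk
        exact ⟨gk, hh1, fun _ => ⟨hh2, hh3⟩⟩
      · exact ⟨0, zero_mem C, fun h => absurd h hk⟩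
    choose g hgC hgP using key'
    have hg0 : ∀ k, k < ℓ → g k ≠ 0 := fun k hk => (hgP k hk).1
    have hsupp : ∀ k, k < ℓ → ∀ j : Fin n, g k j ≠ 0 →
        k * s ≤ (j : ℕ) ∧ (j : ℕ) < k * s + τ + s := fun k hk => (hgP k hk).2
    -- a nonzero position of g k in its first block
    have hpex : ∀ k : ℕ, ∃ j : Fin n, k < ℓ →
        (g k j ≠ 0 ∧ k * s ≤ (j : ℕ) ∧ (j : ℕ) < k * s + s) := by
      intro k
      by_cases hk : k < ℓ
      · have hnb' := hnb (g k) (hgC k) (hg0 k hk)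
        simp only [IsBurst] at hnb'
        push_neg at hnb'
        obtain ⟨j, hj1, hj2⟩ := hnb' (k * s + s)
        have hub := (hsupp k hk j hj1).2
        have hlb := (hsupp k hk j hj1).1
        exact ⟨j, fun _ => ⟨hj1, hlb, by omega⟩⟩
      · exact ⟨⟨0, hn0⟩, fun h => absurd h hk⟩
    choose p hpP using hpex
    -- partial sums
    set Cw : ℕ → (Fin n → F) := fun m => ∑ i ∈ Finset.range m, g i with hCw
    have hCwC : ∀ m, Cw m ∈ C := fun m => sum_mem (fun i _ => hgC i)
    have hCwap : ∀ m (j : Fin n), Cw m j = ∑ i ∈ Finset.range m, g i j := by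
      intro m j
      rw [hCw]
      exact Finset.sum_apply j (Finset.range m) g
    have hdiffs : ∀ k k' : ℕ, k ≤ k' → ∀ j : Fin n,
        Cw k' j - Cw k j = ∑ i ∈ Finset.Ico k k', g i j := by
      intro k k' hkk j
      rw [hCwap, hCwap, Finset.sum_Ico_eq_sub (fun i => g i j) hkk]
    -- Cw k vanishes at positions ≥ k*s + τ
    have hCwhigh : ∀ k, k ≤ ℓ → ∀ j : Fin n, k * s + τ ≤ (j : ℕ) → Cw k j = 0 := by
      intro k hk j hj
      rw [hCwap]
      apply Finset.sum_eq_zero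
      intro i hi
      rw [Finset.mem_range] at hi
      by_contra hne
      have hub := (hsupp i (lt_of_lt_of_le hi hk) j hne).2
      have hle : i * s + s ≤ k * s := by
        calc i * s + s = (i + 1) * s := by ring
        _ ≤ k * s := mul_le_mul_left hi s
      omega
    -- distinctness of partial sums
    have hCwne : ∀ k k' : ℕ, k < k' → k' ≤ ℓ → Cw k ≠ Cw k' := by
      intro k k' hkk hk' heqq
      have hkℓ : k < ℓ := lt_of_lt_of_le hkk hk'
      obtain ⟨hp1, hp2, hp3⟩ := hpP k hkℓ
      have h0 : Cw k' (p k) - Cw k (p k) = 0 := by rw [heqq, sub_self]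
      rw [hdiffs k k' (le_of_lt hkk)] at h0
      have hsingle : ∑ i ∈ Finset.Ico k k', g i (p k) = g k (p k) := by
        apply Finset.sum_eq_single_of_mem
        · rw [Finset.mem_Ico]; exact ⟨le_refl k, hkk⟩
        · intro i hi hne
          rw [Finset.mem_Ico] at hi
          by_contra hgne
          have hlow := (hsupp i (lt_of_lt_of_le hi.2 hk') (p k) hgne).1
          have hge : k * s + s ≤ i * s := by
            calc k * s + s = (k + 1) * s := by ring
            _ ≤ i * s := mul_le_mul_left (by omega) s
          omega
      rw [hsingle] at h0
      exact hp1 h0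
    -- the common word y
    set y : Fin n → F := fun j => if (j : ℕ) < τ then Cw ℓ j else 0 with hy
    have hburst : ∀ k, k ≤ ℓ → IsBurst τ (y - Cw k) := by
      intro k hk
      refine ⟨k * s, fun j hj => ?_⟩
      by_contra hcon
      apply hj
      have hksτ : k * s ≤ τ := by
        calc k * s ≤ ℓ * s := mul_le_mul_left hk s
        _ = τ := hs.symm
      have hcon' : (j : ℕ) < k * s ∨ k * s + τ ≤ (j : ℕ) := by omega
      show y j - Cw k j = 0
      rcases hcon' with hlow | hhigh
      · have hjτ : (j : ℕ) < τ := lt_of_lt_of_le hlow hksτ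
        have hyj : y j = Cw ℓ j := by rw [hy]; simp [hjτ]
        rw [hyj, hdiffs k ℓ hk]
        apply Finset.sum_eq_zero
        intro i hi
        rw [Finset.mem_Ico] at hi
        by_contra hgne
        have hlo := (hsupp i hi.2 j hgne).1
        have : k * s ≤ i * s := mul_le_mul_left hi.1 s
        omega
      · have hyj : y j = 0 := by
          rw [hy]
          have : ¬ ((j : ℕ) < τ) := by omega
          simp [this]
        rw [hyj, hCwhigh k hk j hhigh, sub_self]
    -- list decoding contradiction
    obtain ⟨D, hDsub, hDcard, hDcor⟩ := h3
    have hmem : ∀ k, k ≤ ℓ → Cw k ∈ D y := by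
      intro k hk
      have hc := hDcor (Cw k) (hCwC k) (y - Cw k) (hburst k hk)
      have heq2 : Cw k + (y - Cw k) = y := by abel
      rwa [heq2] at hc
    have hinj : Function.Injective (fun k : Fin (ℓ + 1) => Cw (k : ℕ)) := by
      intro a b hab
      by_contra hne
      have hne' : (a : ℕ) ≠ (b : ℕ) := fun h => hne (Fin.ext h)
      have hb2 : (b : ℕ) ≤ ℓ := Nat.lt_succ_iff.mp b.2
      have ha2 : (a : ℕ) ≤ ℓ := Nat.lt_succ_iff.mp a.2
      rcases Nat.lt_or_ge (a : ℕ) (b : ℕ) with h | h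
      · exact hCwne a b h hb2 hab
      · exact hCwne b a (by omega) ha2 hab.symm
    have hsub2 : Finset.image (fun k : Fin (ℓ + 1) => Cw (k : ℕ)) Finset.univ ⊆ D y := by
      intro x hx
      rw [Finset.mem_image] at hx
      obtain ⟨k, _, rfl⟩ := hx
      exact hmem k (Nat.lt_succ_iff.mp k.2)
    have hfin : ℓ + 1 ≤ (D y).card := by
      calc ℓ + 1 = Fintype.card (Fin (ℓ + 1)) := (Fintype.card_fin _).symm
        _ = (Finset.image (fun k : Fin (ℓ + 1) => Cw (k : ℕ)) Finset.univ).card := by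
            rw [Finset.card_image_of_injective _ hinj, Finset.card_univ]
        _ ≤ (D y).card := Finset.card_le_card hsub2
    have := hDcard y
    omega
  -- conclude by arithmetic
  have hexp : (n - (τ + s)) * ℓ + (ℓ + 1) * τ = ℓ * n := by
    have h1 : (n - (τ + s)) * ℓ = n * ℓ - (τ + s) * ℓ := Nat.sub_mul n (τ + s) ℓ
    have h2' : (τ + s) * ℓ = (ℓ + 1) * τ := by rw [hs]; ring
    have h3' : (τ + s) * ℓ ≤ n * ℓ := mul_le_mul_left hτs ℓ
    rw [h1, h2', Nat.sub_add_cancel (h2' ▸ h3'), Nat.mul_comm]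
  calc Nat.card ↥C ^ ℓ * q ^ ((ℓ + 1) * τ)
      ≤ (q ^ (n - (τ + s))) ^ ℓ * q ^ ((ℓ + 1) * τ) :=
        mul_le_mul_left (Nat.pow_le_pow_left hCle ℓ) _
    _ = q ^ ((n - (τ + s)) * ℓ + (ℓ + 1) * τ) := by rw [← pow_mul, ← pow_add]
    _ = q ^ (ℓ * n) := by rw [hexp]
end

section
/- For every alphabet F of size q > 2, the code C ⊆ F^4 of size 2q−2 defined as the union of C₁ = {(a,a,a,0) : a ∈ F, a ≠ 0} and C₂ = {(0,a,a,a) : a ∈ F, a ≠ 0} satisfies: (i) the difference of any two distinct codewords of C is not a 2-burst (so C has a decoder that detects any single 2-burst error); (ii) C has a (2,2)-burst list decoder, i.e., there do not exist 3 distinct pairs (c_i,e_i) of codewords c_i ∈ C and 2-bursts e_i ∈ F^4 with c_0+e_0 = c_1+e_1 = c_2+e_2; and (iii) the redundancy of C equals 4 − log_q(2q−2), which is strictly smaller than 3 = (1 + 1/2)·2. Hence the generalized Reiger bound for group codes does not hold for general (unstructured) codes. -/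
section Helpers
variable {F : Type*} [AddCommGroup F]

lemma burst_left {e : Fin 4 → F} (h : IsBurst 2 e) (h0 : e 0 ≠ 0) :
    e 2 = 0 ∧ e 3 = 0 := by
  obtain ⟨a, ha⟩ := h
  have h0' := ha 0 h0
  constructor
  · by_contra h2
    have := ha 2 h2
    omega
  · by_contra h3
    have := ha 3 h3
    omega

lemma burst_right {e : Fin 4 → F} (h : IsBurst 2 e) (h3 : e 3 ≠ 0) :
    e 0 = 0 ∧ e 1 = 0 := by
  obtain ⟨a, ha⟩ := h
  have h3' := ha 3 h3
  constructor
  · by_contra h0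
    have := ha 0 h0
    omega
  · by_contra h1
    have := ha 1 h1
    omega
end Helpers
section H2
variable {F : Type*} [AddCommGroup F]

lemma P1 {a : F} (ha : a ≠ 0) {e y : Fin 4 → F} (hb : IsBurst 2 e)
    (hy : ![a, a, a, 0] + e = y) : y 0 = a ∨ (y 2 = a ∧ y 3 = 0) := by
  have h0 : a + e 0 = y 0 := by simpa using congrFun hy 0
  have h2 : a + e 2 = y 2 := by simpa using congrFun hy 2
  have h3 : e 3 = y 3 := by simpa using congrFun hy 3
  by_cases he : e 0 = 0
  · left; rw [he, add_zero] at h0; exact h0.symm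
  · right
    obtain ⟨h2', h3'⟩ := burst_left hb he
    rw [h2', add_zero] at h2
    rw [h3'] at h3
    exact ⟨h2.symm, h3.symm⟩

lemma P2 {a : F} (ha : a ≠ 0) {e y : Fin 4 → F} (hb : IsBurst 2 e)
    (hy : ![0, a, a, a] + e = y) : y 3 = a ∨ (y 1 = a ∧ y 0 = 0) := by
  have h3 : a + e 3 = y 3 := by simpa using congrFun hy 3
  have h1 : a + e 1 = y 1 := by simpa using congrFun hy 1
  have h0 : e 0 = y 0 := by simpa using congrFun hy 0
  by_cases he : e 3 = 0
  · left; rw [he, add_zero] at h3; exact h3.symm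
  · right
    obtain ⟨h0', h1'⟩ := burst_right hb he
    rw [h1', add_zero] at h1
    rw [h0'] at h0
    exact ⟨h1.symm, h0.symm⟩
end H2
section H3
variable {F : Type*} [AddCommGroup F] {y : Fin 4 → F}

lemma kill21a {a b c : F} (hab : a ≠ b) (hac : a ≠ c) (hbc : b ≠ c)
    (H1 : y 0 = a ∨ (y 2 = a ∧ y 3 = 0)) (H2 : y 0 = b ∨ (y 2 = b ∧ y 3 = 0))
    (H3 : y 0 = c ∨ (y 2 = c ∧ y 3 = 0)) : False := by
  rcases H1 with h1 | ⟨h1, h1'⟩ <;> rcases H2 with h2 | ⟨h2, h2'⟩ <;>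
    rcases H3 with h3 | ⟨h3, h3'⟩ <;> simp_all

lemma kill21b {a b c : F} (ha : a ≠ 0) (hb : b ≠ 0) (hc : c ≠ 0) (hab : a ≠ b)
    (H1 : y 0 = a ∨ (y 2 = a ∧ y 3 = 0)) (H2 : y 0 = b ∨ (y 2 = b ∧ y 3 = 0))
    (H3 : y 3 = c ∨ (y 1 = c ∧ y 0 = 0)) : False := by
  rcases H1 with h1 | ⟨h1, h1'⟩ <;> rcases H2 with h2 | ⟨h2, h2'⟩ <;>
    rcases H3 with h3 | ⟨h3, h3'⟩ <;> simp_all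

lemma kill22a {a b c : F} (hab : a ≠ b) (hac : a ≠ c) (hbc : b ≠ c)
    (H1 : y 3 = a ∨ (y 1 = a ∧ y 0 = 0)) (H2 : y 3 = b ∨ (y 1 = b ∧ y 0 = 0))
    (H3 : y 3 = c ∨ (y 1 = c ∧ y 0 = 0)) : False := by
  rcases H1 with h1 | ⟨h1, h1'⟩ <;> rcases H2 with h2 | ⟨h2, h2'⟩ <;>
    rcases H3 with h3 | ⟨h3, h3'⟩ <;> simp_all

lemma kill22b {a b c : F} (ha : a ≠ 0) (hb : b ≠ 0) (hc : c ≠ 0) (hab : a ≠ b)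
    (H1 : y 3 = a ∨ (y 1 = a ∧ y 0 = 0)) (H2 : y 3 = b ∨ (y 1 = b ∧ y 0 = 0))
    (H3 : y 0 = c ∨ (y 2 = c ∧ y 3 = 0)) : False := by
  rcases H1 with h1 | ⟨h1, h1'⟩ <;> rcases H2 with h2 | ⟨h2, h2'⟩ <;>
    rcases H3 with h3 | ⟨h3, h3'⟩ <;> simp_all
end H3
section H4
variable {F : Type*} [AddCommGroup F]

lemma vec1_inj {a b : F} (h : ![a, a, a, (0:F)] = ![b, b, b, 0]) : a = b := by
  simpa using congrFun h 0

lemma vec2_inj {a b : F} (h : ![(0:F), a, a, a] = ![0, b, b, b]) : a = b := by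
  simpa using congrFun h 1

lemma no_three (c e : Fin 3 → Fin 4 → F)
    (hc : ∀ i, (∃ a : F, a ≠ 0 ∧ c i = ![a, a, a, 0]) ∨
               (∃ a : F, a ≠ 0 ∧ c i = ![0, a, a, a]))
    (hb : ∀ i, IsBurst 2 (e i))
    (hne : ∀ i j : Fin 3, i ≠ j → c i ≠ c j)
    (hsum : ∀ i, c i + e i = c 0 + e 0) : False := by
  set y := c 0 + e 0 with hy
  rcases hc 0 with ⟨a, ha, hca⟩ | ⟨a, ha, hca⟩ <;>
    rcases hc 1 with ⟨b, hb', hcb⟩ | ⟨b, hb', hcb⟩ <;>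
    rcases hc 2 with ⟨d, hd, hcd⟩ | ⟨d, hd, hcd⟩
  all_goals {
    have Q0 := hca ▸ hsum 0
    have Q1 := hcb ▸ hsum 1
    have Q2 := hcd ▸ hsum 2
    first
    | exact kill21a
        (fun h => hne 0 1 (by decide) (by rw [hca, hcb, h]))
        (fun h => hne 0 2 (by decide) (by rw [hca, hcd, h]))
        (fun h => hne 1 2 (by decide) (by rw [hcb, hcd, h]))
        (P1 ha (hb 0) Q0) (P1 hb' (hb 1) Q1) (P1 hd (hb 2) Q2)
    | exact kill22a
        (fun h => hne 0 1 (by decide) (by rw [hca, hcb, h]))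
        (fun h => hne 0 2 (by decide) (by rw [hca, hcd, h]))
        (fun h => hne 1 2 (by decide) (by rw [hcb, hcd, h]))
        (P2 ha (hb 0) Q0) (P2 hb' (hb 1) Q1) (P2 hd (hb 2) Q2)
    | exact kill21b ha hb' hd
        (fun h => hne 0 1 (by decide) (by rw [hca, hcb, h]))
        (P1 ha (hb 0) Q0) (P1 hb' (hb 1) Q1) (P2 hd (hb 2) Q2)
    | exact kill21b ha hd hb'
        (fun h => hne 0 2 (by decide) (by rw [hca, hcd, h]))
        (P1 ha (hb 0) Q0) (P1 hd (hb 2) Q2) (P2 hb' (hb 1) Q1)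
    | exact kill21b hb' hd ha
        (fun h => hne 1 2 (by decide) (by rw [hcb, hcd, h]))
        (P1 hb' (hb 1) Q1) (P1 hd (hb 2) Q2) (P2 ha (hb 0) Q0)
    | exact kill22b ha hb' hd
        (fun h => hne 0 1 (by decide) (by rw [hca, hcb, h]))
        (P2 ha (hb 0) Q0) (P2 hb' (hb 1) Q1) (P1 hd (hb 2) Q2)
    | exact kill22b ha hd hb'
        (fun h => hne 0 2 (by decide) (by rw [hca, hcd, h]))
        (P2 ha (hb 0) Q0) (P2 hd (hb 2) Q2) (P1 hb' (hb 1) Q1)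
    | exact kill22b hb' hd ha
        (fun h => hne 1 2 (by decide) (by rw [hcb, hcd, h]))
        (P2 hb' (hb 1) Q1) (P2 hd (hb 2) Q2) (P1 ha (hb 0) Q0) }
end H4


/-- For every alphabet `F` of size `q > 2`, the code
`C = {(a,a,a,0) : a ≠ 0} ∪ {(0,a,a,a) : a ≠ 0} ⊆ F⁴` of size `2q-2` satisfies:
(i) the difference of any two distinct codewords is not a `2`-burst;
(ii) `C` has a `(2,2)`-burst list decoder (no three distinct codeword/`2`-burst
pairs with equal sums); and
(iii) its redundancy `4 - log_q(2q-2)` is strictly smaller than `3 = (1+1/2)·2`.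
Hence the generalized Reiger bound for group codes fails for general codes. -/
theorem unstructured_code_beats_Reiger (F : Type*) [AddCommGroup F] [Fintype F]
    (hq : 2 < Fintype.card F) (C : Set (Fin 4 → F))
    (hC : C = {w | ∃ a : F, a ≠ 0 ∧ w = ![a, a, a, 0]} ∪
              {w | ∃ a : F, a ≠ 0 ∧ w = ![0, a, a, a]}) :
    (∀ c₁ ∈ C, ∀ c₂ ∈ C, c₁ ≠ c₂ → ¬ IsBurst 2 (c₁ - c₂)) ∧
    (¬ ∃ (c e : Fin 3 → (Fin 4 → F)), (∀ i, c i ∈ C) ∧ (∀ i, IsBurst 2 (e i)) ∧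
        Function.Injective (fun i => (c i, e i)) ∧ ∀ i j, c i + e i = c j + e j) ∧
    C.ncard = 2 * Fintype.card F - 2 ∧
    (4 : ℝ) - Real.logb (Fintype.card F) ((2 * Fintype.card F - 2 : ℕ) : ℝ) < 3 := by
  subst hC
  refine ⟨?_, ?_, ?_, ?_⟩
  · rintro c₁ (⟨a, ha, rfl⟩ | ⟨a, ha, rfl⟩) c₂ (⟨b, hb, rfl⟩ | ⟨b, hb, rfl⟩) hne hB
    · have hab : a - b ≠ 0 := sub_ne_zero.mpr (fun h => hne (by rw [h]))
      have h0 : (![a, a, a, (0:F)] - ![b, b, b, 0]) 0 ≠ 0 := by simpa using hab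
      have h2 : (![a, a, a, (0:F)] - ![b, b, b, 0]) 2 ≠ 0 := by simpa using hab
      exact h2 (burst_left hB h0).1
    · have h3 : (![a, a, a, (0:F)] - ![0, b, b, b]) 3 ≠ 0 := by simpa using hb
      have h0 : (![a, a, a, (0:F)] - ![0, b, b, b]) 0 ≠ 0 := by simpa using ha
      exact h0 (burst_right hB h3).1
    · have h3 : (![(0:F), a, a, a] - ![b, b, b, 0]) 3 ≠ 0 := by simpa using ha
      have h0 : (![(0:F), a, a, a] - ![b, b, b, 0]) 0 ≠ 0 := by
        simpa using hb
      exact h0 (burst_right hB h3).1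
    · have hab : a - b ≠ 0 := sub_ne_zero.mpr (fun h => hne (by rw [h]))
      have h3 : (![(0:F), a, a, a] - ![0, b, b, b]) 3 ≠ 0 := by simpa using hab
      have h1 : (![(0:F), a, a, a] - ![0, b, b, b]) 1 ≠ 0 := by simpa using hab
      exact h1 (burst_right hB h3).2
  · rintro ⟨c, e, hcC, hbur, hinj, hsum⟩
    have hne : ∀ i j : Fin 3, i ≠ j → c i ≠ c j := by
      intro i j hij hcij
      apply hij
      apply hinj
      have h1 : c i + e i = c j + e j := hsum i j
      rw [hcij] at h1
      have : e i = e j := by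
        have := add_left_cancel h1
        exact this
      simp only [Prod.mk.injEq]
      exact ⟨hcij, this⟩
    exact no_three c e (fun i => by
        rcases hcC i with ⟨a, ha, hw⟩ | ⟨a, ha, hw⟩
        · exact Or.inl ⟨a, ha, hw⟩
        · exact Or.inr ⟨a, ha, hw⟩)
      hbur hne (fun i => hsum i 0)
  · have h1 : {w : Fin 4 → F | ∃ a : F, a ≠ 0 ∧ w = ![a, a, a, 0]} =
        (fun a : F => ![a, a, a, 0]) '' {a | a ≠ 0} := by
      ext w; simp [Set.mem_image, eq_comm]
    have h2 : {w : Fin 4 → F | ∃ a : F, a ≠ 0 ∧ w = ![0, a, a, a]} =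
        (fun a : F => ![0, a, a, a]) '' {a | a ≠ 0} := by
      ext w; simp [Set.mem_image, eq_comm]
    have hd : Disjoint {w : Fin 4 → F | ∃ a : F, a ≠ 0 ∧ w = ![a, a, a, 0]}
        {w : Fin 4 → F | ∃ a : F, a ≠ 0 ∧ w = ![0, a, a, a]} := by
      rw [Set.disjoint_left]
      rintro w ⟨a, ha, rfl⟩ ⟨b, hb, hw⟩
      exact ha (by simpa using congrFun hw 0)
    have hn0 : ({a : F | a ≠ 0}).ncard = Fintype.card F - 1 := by
      have : {a : F | a ≠ 0} = (Set.univ : Set F) \ {0} := by ext a; simp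
      rw [this, Set.ncard_diff (by simp) (Set.toFinite _)]
      simp [Set.ncard_univ]
    rw [Set.ncard_union_eq hd (Set.toFinite _) (Set.toFinite _), h1, h2,
      Set.ncard_image_of_injective _ (fun a b h => by simpa using congrFun h 0),
      Set.ncard_image_of_injective _ (fun a b h => by simpa using congrFun h 1), hn0]
    omega
  · set q := Fintype.card F
    have h1 : (1 : ℝ) < q := by exact_mod_cast by omega
    have h2 : (q : ℝ) < ((2 * q - 2 : ℕ) : ℝ) := by exact_mod_cast by omega
    have h3 : (1 : ℝ) < Real.logb q ((2 * q - 2 : ℕ) : ℝ) := by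
      calc (1 : ℝ) = Real.logb q q := (Real.logb_self_eq_one h1).symm
      _ < _ := Real.logb_lt_logb h1 (by linarith) h2
    linarith
end

section
/- Let C be a code of length n over an alphabet of size q ≥ 2 and let τ be a positive integer such that: (1) τ is even and 2τ ≤ n; (2) there is a decoder for C that detects any single τ-burst error; and (3) there is a (2,τ)-burst list decoder for C. Then the redundancy r = n − log_q |C| of C satisfies r ≥ 2τ − log_q(2q^{τ/2} − 2); equivalently, |C| ≤ q^{n−2τ} · (2q^{τ/2} − 2). In particular, r > (1 + 1/2)·τ − log_q 2. -/
/-!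
Write `τ = 2s` and cut a word into blocks `B₁ B₂ B₃ B₄` of length `s` followed by a tail.
Fix a tail and consider the codewords carrying it. If `c''` shares `B₁` with `d` and `c` shares
`B₄` with `d`, then the word equal to `c''` on `B₁ B₂` and to `c` afterwards is within a
`τ`-burst (on `B₁ B₂`, `B₃ B₄`, `B₂ B₃`) of each of `c`, `c''`, `d`, which list size 2 forbids;
`c = c''` is excluded by burst detection, since then `c - d` is a burst on `B₂ B₃`. Hence each of
these codewords is the only one with its `B₁` or the only one with its `B₄`. Unless one block
alone separates all of them, each block misses one of its `q^s` values on them, so at most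
`2q^s - 2` codewords carry each of the `q^(n-2τ)` tails.
-/

open Finset

section Isolation

variable {α β γ : Type*}

def IsAloneInFiber (f : α → β) (S : Finset α) (d : α) : Prop :=
  ∀ e ∈ S, f e = f d → e = d

variable {f : α → β} {S : Finset α}

theorem injOn_filter_isAloneInFiber [DecidablePred (IsAloneInFiber f S)] :
    Set.InjOn f ↑(S.filter (IsAloneInFiber f S)) := fun _ ha b hb hab =>
  ((mem_filter.mp ha).2 b (mem_filter.mp hb).1 hab.symm).symm

variable [Fintype β]

theorem card_filter_isAloneInFiber_le [DecidablePred (IsAloneInFiber f S)] :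
    #(S.filter (IsAloneInFiber f S)) ≤ Fintype.card β :=
  card_le_card_of_injOn f (fun _ _ => mem_coe.mpr (mem_univ _)) injOn_filter_isAloneInFiber

theorem card_filter_isAloneInFiber_lt [DecidableEq β] [DecidablePred (IsAloneInFiber f S)]
    {d : α} (hd : d ∈ S) (hnd : ¬ IsAloneInFiber f S d) :
    #(S.filter (IsAloneInFiber f S)) < Fintype.card β := by
  rw [← card_image_of_injOn injOn_filter_isAloneInFiber]
  refine card_lt_univ_of_notMem (x := f d) fun hfd => hnd ?_
  obtain ⟨a, ha, hfa⟩ := mem_image.mp hfd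
  obtain rfl : d = a := (mem_filter.mp ha).2 d hd hfa.symm
  exact (mem_filter.mp ha).2

theorem card_le_of_isAloneInFiber_or [Fintype γ] {g : α → γ}
    (hβ : 2 ≤ Fintype.card β) (hγ : 2 ≤ Fintype.card γ)
    (h : ∀ d ∈ S, IsAloneInFiber f S d ∨ IsAloneInFiber g S d) :
    #S ≤ Fintype.card β + Fintype.card γ - 2 := by
  classical
  by_cases hf : ∀ d ∈ S, IsAloneInFiber f S d
  · have := card_filter_isAloneInFiber_le (f := f) (S := S)
    rw [filter_true_of_mem hf] at this
    omega
  by_cases hg : ∀ d ∈ S, IsAloneInFiber g S d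
  · have := card_filter_isAloneInFiber_le (f := g) (S := S)
    rw [filter_true_of_mem hg] at this
    omega
  push Not at hf hg
  obtain ⟨d₁, hd₁, hnd₁⟩ := hf
  obtain ⟨d₂, hd₂, hnd₂⟩ := hg
  have hS : S ⊆ S.filter (IsAloneInFiber f S) ∪ S.filter (IsAloneInFiber g S) := fun d hd => by
    simpa [mem_union, mem_filter, hd] using h d hd
  have := card_filter_isAloneInFiber_lt hd₁ hnd₁
  have := card_filter_isAloneInFiber_lt hd₂ hnd₂
  have := (card_le_card hS).trans (card_union_le _ _)
  omega

end Isolation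

section Bursts

variable {F : Type*} [AddCommGroup F] {n τ : ℕ}

theorem isBurst_sub_of_eq_outside {x y : Fin n → F} (a : ℕ)
    (h : ∀ j : Fin n, (j : ℕ) < a ∨ a + τ ≤ j → x j = y j) : IsBurst τ (x - y) :=
  ⟨a, fun j hj => by
    by_contra hout
    exact hj (sub_eq_zero.mpr (h j (by omega)))⟩

theorem HasBurstDetector.eq_of_isBurst_sub {C : Set (Fin n → F)} (hC : HasBurstDetector C τ)
    {c c' : Fin n → F} (hc : c ∈ C) (hc' : c' ∈ C) (h : IsBurst τ (c - c')) : c = c' := by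
  obtain ⟨D, -, hD⟩ := hC
  by_contra hne
  have hcc : D (c + 0) = {c} := (hD c hc 0 ⟨0, fun j hj => absurd rfl hj⟩).1 rfl
  have hc'c : D (c' + (c - c')) = ∅ := (hD c' hc' _ h).2 (sub_ne_zero.mpr hne)
  rw [add_zero] at hcc
  rw [add_sub_cancel, hcc] at hc'c
  exact singleton_ne_empty c hc'c

theorem HasBurstListDecoder.card_le {C : Set (Fin n → F)} {ℓ : ℕ}
    (hC : HasBurstListDecoder C ℓ τ) (y : Fin n → F) {T : Finset (Fin n → F)}
    (hTC : ↑T ⊆ C) (hT : ∀ c ∈ T, IsBurst τ (y - c)) : #T ≤ ℓ := by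
  obtain ⟨D, -, hcard, hD⟩ := hC
  refine (card_le_card fun c hc => ?_).trans (hcard y)
  simpa using hD c (hTC hc) (y - c) (hT c hc)

end Bursts

section Blocks

variable {F : Type*} {n : ℕ}

def blockAt (a len : ℕ) (h : a + len ≤ n) (c : Fin n → F) : Fin len → F :=
  fun i => c ⟨a + i, by omega⟩

theorem eq_of_blockAt_eq {a len : ℕ} {h : a + len ≤ n} {c c' : Fin n → F}
    (hcc' : blockAt a len h c = blockAt a len h c') (j : Fin n) (hj : a ≤ j)
    (hj' : (j : ℕ) < a + len) : c j = c' j := by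
  simpa only [blockAt, Nat.add_sub_cancel' hj] using congrFun hcc' ⟨j - a, by omega⟩

end Blocks

section ListTwo

variable {F : Type*} [AddCommGroup F] {n s : ℕ} {C : Set (Fin n → F)}
  {S : Finset (Fin n → F)}

theorem isAloneInFiber_blockAt_or (h2 : HasBurstDetector C (2 * s))
    (h3 : HasBurstListDecoder C 2 (2 * s)) (hn : 4 * s ≤ n) (hSC : ↑S ⊆ C)
    (htail : ∀ c ∈ S, ∀ c' ∈ S, ∀ j : Fin n, 4 * s ≤ j → c j = c' j) :
    ∀ d ∈ S, IsAloneInFiber (blockAt 0 s (by omega)) S d ∨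
      IsAloneInFiber (blockAt (3 * s) s (by omega)) S d := by
  classical
  intro d hd
  by_contra! h
  simp only [IsAloneInFiber] at h
  push Not at h
  obtain ⟨⟨c'', hc'', h1, hne''⟩, ⟨c, hc, h4, hne⟩⟩ := h
  have agree1 (j : Fin n) (hj : (j : ℕ) < s) : c'' j = d j :=
    eq_of_blockAt_eq h1 j (Nat.zero_le _) (by omega)
  have agree4 (j : Fin n) (hj : 3 * s ≤ j) : c j = d j :=
    (lt_or_ge (j : ℕ) (4 * s)).elim (fun _ => eq_of_blockAt_eq h4 j hj (by omega))
      (htail c hc d hd j)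
  have hcc'' : c ≠ c'' := by
    rintro rfl
    refine hne (h2.eq_of_isBurst_sub (hSC hc) (hSC hd) (isBurst_sub_of_eq_outside s ?_))
    exact fun j hj => hj.elim (agree1 j) fun hj => agree4 j (by omega)
  let y : Fin n → F := fun j => if (j : ℕ) < 2 * s then c'' j else c j
  have hc_burst : IsBurst (2 * s) (y - c) := isBurst_sub_of_eq_outside 0 fun j hj => by
    simp only [y, if_neg (show ¬ (j : ℕ) < 2 * s by omega)]
  have hc''_burst : IsBurst (2 * s) (y - c'') := isBurst_sub_of_eq_outside (2 * s) fun j hj => by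
    rcases hj with hj | hj
    · simp only [y, if_pos hj]
    · simp only [y, if_neg (show ¬ (j : ℕ) < 2 * s by omega)]
      exact htail c hc c'' hc'' j (by omega)
  have hd_burst : IsBurst (2 * s) (y - d) := isBurst_sub_of_eq_outside s fun j hj => by
    rcases hj with hj | hj
    · simp only [y, if_pos (show (j : ℕ) < 2 * s by omega)]
      exact agree1 j hj
    · simp only [y, if_neg (show ¬ (j : ℕ) < 2 * s by omega)]
      exact agree4 j (by omega)
  have := h3.card_le y (T := {c, c'', d})
    (by simp [Set.insert_subset_iff, hSC hc, hSC hc'', hSC hd])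
    (by simp [hc_burst, hc''_burst, hd_burst])
  rw [card_insert_of_notMem (by simp [hcc'', hne]), card_pair hne''] at this
  omega

theorem card_le_two_mul_pow_sub_two (h2 : HasBurstDetector C (2 * s))
    (h3 : HasBurstListDecoder C 2 (2 * s)) (hn : 4 * s ≤ n) [Fintype F]
    (hqs : 2 ≤ Fintype.card F ^ s) (hSC : ↑S ⊆ C)
    (htail : ∀ c ∈ S, ∀ c' ∈ S, ∀ j : Fin n, 4 * s ≤ j → c j = c' j) :
    #S ≤ 2 * Fintype.card F ^ s - 2 := by
  classical
  have hcard : Fintype.card (Fin s → F) = Fintype.card F ^ s := by simp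
  have := card_le_of_isAloneInFiber_or (hcard ▸ hqs) (hcard ▸ hqs)
    (isAloneInFiber_blockAt_or h2 h3 hn hSC htail)
  omega

end ListTwo

/-- Reiger-type bound for list size 2, general codes.
If a code `C` of length `n` over an alphabet of size `q ≥ 2`, with `τ` even and
`2τ ≤ n`, has a decoder detecting any single `τ`-burst error and a
`(2,τ)`-burst list decoder, then `|C| ≤ q^{n-2τ}·(2q^{τ/2} - 2)`, i.e. the
redundancy satisfies `r ≥ 2τ - log_q(2q^{τ/2} - 2) > (1 + 1/2)τ - log_q 2`. -/
theorem Reiger_list_two (F : Type*) [AddCommGroup F] [Fintype F]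
    (n τ : ℕ) (hq : 2 ≤ Fintype.card F) (hτ : 1 ≤ τ) (heven : 2 ∣ τ)
    (hn : 2 * τ ≤ n) (C : Set (Fin n → F))
    (h2 : HasBurstDetector C τ)
    (h3 : HasBurstListDecoder C 2 τ) :
    C.ncard ≤ Fintype.card F ^ (n - 2 * τ) * (2 * Fintype.card F ^ (τ / 2) - 2) := by
  classical
  obtain ⟨s, rfl⟩ := heven
  set q := Fintype.card F
  have hqs : 2 ≤ q ^ s := hq.trans (Nat.le_self_pow (by omega) q)
  let tail := blockAt (F := F) (n := n) (4 * s) (n - 4 * s) (by omega)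
  have hfiber : ∀ t ∈ C.toFinset.image tail, #{c ∈ C.toFinset | tail c = t} ≤ 2 * q ^ s - 2 :=
    fun t _ => card_le_two_mul_pow_sub_two h2 h3 (by omega) hqs
      (fun c hc => Set.mem_toFinset.mp (mem_filter.mp hc).1)
      fun c hc c' hc' j hj => eq_of_blockAt_eq
        ((mem_filter.mp hc).2.trans (mem_filter.mp hc').2.symm) j hj (by omega)
  have himage : #(C.toFinset.image tail) ≤ q ^ (n - 4 * s) :=
    (card_le_univ _).trans_eq (by simp [q])
  rw [Set.ncard_eq_toFinset_card', show 2 * s / 2 = s by omega,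
    show n - 2 * (2 * s) = n - 4 * s by omega, mul_comm]
  exact (card_le_mul_card_image _ _ hfiber).trans (Nat.mul_le_mul_left _ himage)
end

section
/- Let F be a finite Abelian group of size q ≥ 2 and let δ be a nonzero element of F. The code C ⊆ F^4 of size 2q defined as the union of {(a,0,0,a) : a ∈ F} and {(a,δ,δ,a) : a ∈ F} has a (2,2)-burst list decoder: there do not exist 3 distinct pairs (c_i, e_i), i = 0,1,2, of codewords c_i ∈ C and 2-bursts e_i ∈ F^4 with c_0+e_0 = c_1+e_1 = c_2+e_2. (Note that C contains distinct codewords whose difference is a 2-burst, so C has no decoder detecting any single 2-burst error, and its redundancy 3 − log_q 2 is below the bound of Proposition 'Reiger bound for list size 2' that assumes such detection.) -/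
/-- For a finite Abelian group `F` of size `q ≥ 2` and a
nonzero `δ ∈ F`, the code `C = {(a,0,0,a) : a ∈ F} ∪ {(a,δ,δ,a) : a ∈ F} ⊆ F⁴`
of size `2q` has a `(2,2)`-burst list decoder: there are no three distinct
pairs `(c_i, e_i)` of codewords and `2`-bursts with equal sums. Moreover `C`
contains distinct codewords whose difference is a `2`-burst, so `C` has no
decoder detecting any single `2`-burst error. -/
theorem no_detection_needed_example (F : Type*) [AddCommGroup F] [Fintype F]
    (hq : 2 ≤ Fintype.card F) (δ : F) (hδ : δ ≠ 0) (C : Set (Fin 4 → F))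
    (hC : C = {w | ∃ a : F, w = ![a, 0, 0, a]} ∪
              {w | ∃ a : F, w = ![a, δ, δ, a]}) :
    (¬ ∃ (c e : Fin 3 → (Fin 4 → F)), (∀ i, c i ∈ C) ∧ (∀ i, IsBurst 2 (e i)) ∧
        Function.Injective (fun i => (c i, e i)) ∧ ∀ i j, c i + e i = c j + e j) ∧
    ∃ c₁ ∈ C, ∃ c₂ ∈ C, c₁ ≠ c₂ ∧ IsBurst 2 (c₁ - c₂) := by
  classical
  constructor
  · rintro ⟨c, e, hcC, hburst, hinj, hsum⟩
    set y := c 0 + e 0 with hy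
    have he : ∀ i, e i = y - c i := by
      intro i
      rw [hy, ← hsum i 0]
      abel
    have hcinj : Function.Injective c := by
      intro i j h
      apply hinj
      simp only [Prod.mk.injEq]
      exact ⟨h, by rw [he i, he j, h]⟩
    have hstruct : ∀ i, ∃ a bb : F, (bb = 0 ∨ bb = δ) ∧ c i = ![a, bb, bb, a] := by
      intro i
      have := hcC i
      rw [hC] at this
      rcases this with ⟨a, ha⟩ | ⟨a, ha⟩
      · exact ⟨a, 0, Or.inl rfl, ha⟩
      · exact ⟨a, δ, Or.inr rfl, ha⟩
    choose a b hb hc using hstruct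
    have hca : ∀ i, c i 0 = a i ∧ c i 1 = b i ∧ c i 2 = b i ∧ c i 3 = a i := by
      intro i
      rw [hc i]
      refine ⟨rfl, rfl, rfl, rfl⟩
    have hz : ∀ i (j : Fin 4), e i j = 0 → y j = c i j := by
      intro i j h
      have := congrFun (he i) j
      rw [h] at this
      simp only [Pi.sub_apply] at this
      exact sub_eq_zero.mp this.symm
    -- key structural lemma
    have key : ∀ i, (c i = ![y 3, y 2, y 2, y 3]) ∨ (a i = y 0 ∧ a i = y 3) ∨
        (c i = ![y 0, y 1, y 1, y 0]) := by
      intro i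
      obtain ⟨α, hα⟩ := hburst i
      obtain ⟨h0, h1, h2, h3⟩ := hca i
      rcases Nat.lt_or_ge α 1 with hA | hB'
      · -- α = 0 : support ⊆ {0,1}, so e i 2 = e i 3 = 0
        left
        have e2 : e i (2 : Fin 4) = 0 := by
          by_contra h
          have := hα 2 h
          omega
        have e3 : e i (3 : Fin 4) = 0 := by
          by_contra h
          have := hα 3 h
          omega
        have hy2 : y 2 = b i := (hz i 2 e2).trans h2
        have hy3 : y 3 = a i := (hz i 3 e3).trans h3
        rw [hc i, hy2, hy3]
      rcases Nat.lt_or_ge α 2 with hB | hCc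
      · -- α = 1 : support ⊆ {1,2}, so e i 0 = e i 3 = 0
        right; left
        have e0 : e i (0 : Fin 4) = 0 := by
          by_contra h
          have := hα 0 h
          omega
        have e3 : e i (3 : Fin 4) = 0 := by
          by_contra h
          have := hα 3 h
          omega
        exact ⟨((hz i 0 e0).trans h0).symm, ((hz i 3 e3).trans h3).symm⟩
      · -- α ≥ 2 : e i 0 = e i 1 = 0
        right; right
        have e0 : e i (0 : Fin 4) = 0 := by
          by_contra h
          have := hα 0 h
          omega
        have e1 : e i (1 : Fin 4) = 0 := by
          by_contra h
          have := hα 1 h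
          omega
        have hy0 : y 0 = a i := (hz i 0 e0).trans h0
        have hy1 : y 1 = b i := (hz i 1 e1).trans h1
        rw [hc i, hy0, hy1]
    have pigeon : ∀ v : Fin 3 → Bool, ∃ i j : Fin 3, i ≠ j ∧ v i = v j := by decide
    by_cases hB : ∃ i, a i = y 0 ∧ a i = y 3
    · -- all first coordinates equal y 0
      obtain ⟨i₀, hi₀, hi₀'⟩ := hB
      have hy03 : y 0 = y 3 := hi₀ ▸ hi₀'
      have ha : ∀ i, a i = y 0 := by
        intro i
        rcases key i with h | ⟨h, _⟩ | h
        · have := congrFun h 0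
          rw [(hca i).1] at this
          simp only [Matrix.cons_val_zero] at this
          exact this.trans hy03.symm
        · exact h
        · have := congrFun h 0
          rw [(hca i).1] at this
          simpa using this
      obtain ⟨i, j, hij, hv⟩ := pigeon (fun i => decide (b i = 0))
      have hbij : b i = b j := by
        by_cases h : b i = 0
        · simp [h] at hv
          by_cases h' : b j = 0
          · rw [h, h']
          · simp [h'] at hv
        · simp [h] at hv
          by_cases h' : b j = 0
          · simp [h'] at hv
          · rw [(hb i).resolve_left h, (hb j).resolve_left h']
      exact hij (hcinj (by rw [hc i, hc j, ha i, ha j, hbij]))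
    ·
      obtain ⟨i, j, hij, hv⟩ := pigeon (fun i => decide (c i = ![y 3, y 2, y 2, y 3]))
      have : c i = c j := by
        by_cases h : c i = ![y 3, y 2, y 2, y 3]
        · simp [h] at hv
          by_cases h' : c j = ![y 3, y 2, y 2, y 3]
          · rw [h, h']
          · simp [h'] at hv
        · simp [h] at hv
          by_cases h' : c j = ![y 3, y 2, y 2, y 3]
          · simp [h'] at hv
          · have ki := ((key i).resolve_left h).resolve_left (fun hh => hB ⟨i, hh⟩)
            have kj := ((key j).resolve_left h').resolve_left (fun hh => hB ⟨j, hh⟩)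
            rw [ki, kj]
      exact hij (hcinj this)
  · refine ⟨![0, 0, 0, 0], ?_, ![0, δ, δ, 0], ?_, ?_, ?_⟩
    · rw [hC]; left; exact ⟨0, rfl⟩
    · rw [hC]; right; exact ⟨0, rfl⟩
    · intro h
      have := congrFun h 1
      simp at this
      exact hδ this.symm
    · refine ⟨1, ?_⟩
      intro j hj
      fin_cases j <;> simp_all
end

section
/- Let C be a code of length n over an alphabet of size q ≥ 2 and let τ be a positive integer such that τ is even, 2τ ≤ n, and there is a (2,τ)-burst list decoder for C (no burst-error detection capability is assumed). Then the redundancy r = n − log_q |C| of C satisfies r ≥ (1 + 1/2)·τ − log_q 2; equivalently, |C| ≤ 2·q^{n − 3τ/2}. -/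
section AuxCount

open Finset

variable {W A G : Type*} [DecidableEq W] [DecidableEq A] [DecidableEq G]

/-- If `c` has a "big" `fG`-fiber (≥ 3 elements), then its `fA`-fiber is a singleton. -/
lemma singleton_fiber [Fintype A] [Fintype G] (s : Finset W) (fA : W → A) (fG : W → G)
    (hyp : ∀ c0 ∈ s, ∀ c1 ∈ s, ∀ c2 ∈ s, c0 ≠ c1 → c0 ≠ c2 → c1 ≠ c2 →
      fA c0 = fA c1 → fG c0 = fG c2 → False)
    (c : W) (hc : c ∈ s)
    (h3 : 3 ≤ (s.filter (fun x => fG x = fG c)).card) :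
    s.filter (fun x => fA x = fA c) = {c} := by
  have hcmem : c ∈ s.filter (fun x => fA x = fA c) := mem_filter.mpr ⟨hc, rfl⟩
  rw [Finset.eq_singleton_iff_unique_mem]
  refine ⟨hcmem, fun x hx => ?_⟩
  by_contra hne
  obtain ⟨hxs, hfx⟩ := mem_filter.mp hx
  have h2' : 1 < ((s.filter (fun z => fG z = fG c)).erase x).card := by
    by_cases hxG : x ∈ s.filter (fun z => fG z = fG c)
    · rw [Finset.card_erase_of_mem hxG]; omega
    · rw [Finset.erase_eq_of_notMem hxG]; omega
  obtain ⟨c2, hc2mem, hc2c⟩ := Finset.exists_mem_ne h2' c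
  have hc2x : c2 ≠ x := (Finset.mem_erase.mp hc2mem).1
  obtain ⟨hc2s, hgc2⟩ := mem_filter.mp (Finset.mem_erase.mp hc2mem).2
  exact hyp c hc x hxs c2 hc2s (Ne.symm hne) (Ne.symm hc2c) (Ne.symm hc2x) hfx.symm hgc2.symm

lemma one_side [Fintype A] (s Q R : Finset W) (fA : W → A)
    (hQs : Q ⊆ s) (hRs : R ⊆ s)
    (hQsing : ∀ q ∈ Q, s.filter (fun x => fA x = fA q) = {q})
    (hR2 : ∀ r ∈ R, (s.filter (fun x => fA x = fA r)).card ≤ 2)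
    (hQR : Disjoint Q R) :
    2 * Q.card + R.card ≤ 2 * Fintype.card A := by
  have hinj : Set.InjOn fA Q := by
    intro x hx y hy hxy
    have hmem : y ∈ s.filter (fun z => fA z = fA x) :=
      mem_filter.mpr ⟨hQs hy, hxy.symm⟩
    rw [hQsing x hx, Finset.mem_singleton] at hmem
    exact hmem.symm
  have h1 : (Q.image fA).card = Q.card := Finset.card_image_of_injOn hinj
  have h2 : R.card ≤ 2 * (R.image fA).card := by
    refine Finset.card_le_mul_card_image R 2 (fun b hb => ?_)
    obtain ⟨r, hr, rfl⟩ := Finset.mem_image.mp hb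
    calc (R.filter (fun x => fA x = fA r)).card
        ≤ (s.filter (fun x => fA x = fA r)).card :=
          Finset.card_le_card (Finset.filter_subset_filter _ hRs)
      _ ≤ 2 := hR2 r hr
  have h3 : Disjoint (Q.image fA) (R.image fA) := by
    rw [Finset.disjoint_left]
    rintro a haQ haR
    obtain ⟨q, hq, rfl⟩ := Finset.mem_image.mp haQ
    obtain ⟨r, hr, hra⟩ := Finset.mem_image.mp haR
    have hmem : r ∈ s.filter (fun z => fA z = fA q) := mem_filter.mpr ⟨hRs hr, hra⟩
    rw [hQsing q hq, Finset.mem_singleton] at hmem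
    exact Finset.disjoint_left.mp hQR hq (hmem ▸ hr)
  have h4 : (Q.image fA ∪ R.image fA).card ≤ Fintype.card A := by
    simpa using Finset.card_le_univ (Q.image fA ∪ R.image fA)
  have h5 : (Q.image fA ∪ R.image fA).card = (Q.image fA).card + (R.image fA).card :=
    Finset.card_union_of_disjoint h3
  omega

/-- The key counting lemma: if no `c0, c1, c2` distinct in `s` satisfy
`fA c0 = fA c1` and `fG c0 = fG c2`, then `|s| ≤ |A| + |G|`. -/
lemma aux_count [Fintype A] [Fintype G] (s : Finset W) (fA : W → A) (fG : W → G)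
    (hyp : ∀ c0 ∈ s, ∀ c1 ∈ s, ∀ c2 ∈ s, c0 ≠ c1 → c0 ≠ c2 → c1 ≠ c2 →
      fA c0 = fA c1 → fG c0 = fG c2 → False) :
    s.card ≤ Fintype.card A + Fintype.card G := by
  set P := s.filter (fun c => 3 ≤ (s.filter (fun x => fA x = fA c)).card) with hP
  set Q := s.filter (fun c => 3 ≤ (s.filter (fun x => fG x = fG c)).card) with hQ
  set R := s.filter (fun c => (s.filter (fun x => fA x = fA c)).card ≤ 2 ∧
      (s.filter (fun x => fG x = fG c)).card ≤ 2) with hR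
  have hyp' : ∀ c0 ∈ s, ∀ c1 ∈ s, ∀ c2 ∈ s, c0 ≠ c1 → c0 ≠ c2 → c1 ≠ c2 →
      fG c0 = fG c1 → fA c0 = fA c2 → False := by
    intro c0 h0 c1 h1 c2 h2 d01 d02 d12 e1 e2
    exact hyp c0 h0 c2 h2 c1 h1 d02 d01 (Ne.symm d12) e2 e1
  have side1 : 2 * Q.card + R.card ≤ 2 * Fintype.card A := by
    refine one_side s Q R fA (Finset.filter_subset _ _) (Finset.filter_subset _ _)
      (fun q hq => ?_) (fun r hr => (Finset.mem_filter.mp hr).2.1) ?_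
    · obtain ⟨hqs, hq3⟩ := Finset.mem_filter.mp hq
      exact singleton_fiber s fA fG hyp q hqs hq3
    · rw [Finset.disjoint_left]
      intro a ha hb
      have h1 := (Finset.mem_filter.mp ha).2
      have h2 := (Finset.mem_filter.mp hb).2.2
      omega
  have side2 : 2 * P.card + R.card ≤ 2 * Fintype.card G := by
    refine one_side s P R fG (Finset.filter_subset _ _) (Finset.filter_subset _ _)
      (fun p hp => ?_) (fun r hr => (Finset.mem_filter.mp hr).2.2) ?_
    · obtain ⟨hps, hp3⟩ := Finset.mem_filter.mp hp
      exact singleton_fiber s fG fA hyp' p hps hp3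
    · rw [Finset.disjoint_left]
      intro a ha hb
      have h1 := (Finset.mem_filter.mp ha).2
      have h2 := (Finset.mem_filter.mp hb).2.1
      omega
  have hcover : s ⊆ P ∪ Q ∪ R := by
    intro x hx
    by_cases h1 : 3 ≤ (s.filter (fun z => fA z = fA x)).card
    · exact Finset.mem_union_left _ (Finset.mem_union_left _ (Finset.mem_filter.mpr ⟨hx, h1⟩))
    by_cases h2 : 3 ≤ (s.filter (fun z => fG z = fG x)).card
    · exact Finset.mem_union_left _ (Finset.mem_union_right _ (Finset.mem_filter.mpr ⟨hx, h2⟩))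
    · exact Finset.mem_union_right _ (Finset.mem_filter.mpr ⟨hx, by omega, by omega⟩)
  have hcard : s.card ≤ P.card + Q.card + R.card := by
    calc s.card ≤ (P ∪ Q ∪ R).card := Finset.card_le_card hcover
      _ ≤ (P ∪ Q).card + R.card := Finset.card_union_le _ _
      _ ≤ P.card + Q.card + R.card := by
          have := Finset.card_union_le P Q; omega
  omega

end AuxCount

/-- Reiger-type bound for list size 2 without detection.
If a code `C` of length `n` over an alphabet of size `q ≥ 2`, with `τ` even and
`2τ ≤ n`, has a `(2,τ)`-burst list decoder, then `|C| ≤ 2·q^{n - 3τ/2}`, i.e.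
the redundancy satisfies `r ≥ (1 + 1/2)τ - log_q 2`. -/
theorem Reiger_list_two_no_detection (F : Type*) [AddCommGroup F] [Fintype F]
    (n τ : ℕ) (hq : 2 ≤ Fintype.card F) (hτ : 1 ≤ τ) (heven : 2 ∣ τ)
    (hn : 2 * τ ≤ n) (C : Set (Fin n → F))
    (h3 : HasBurstListDecoder C 2 τ) :
    C.ncard ≤ 2 * Fintype.card F ^ (n - (τ + τ / 2)) := by
  classical
  obtain ⟨D, hDsub, hDcard, hDcorr⟩ := h3
  obtain ⟨t, ht⟩ := heven
  subst ht
  set m := n - 3 * t with hm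
  have h4t : 4 * t ≤ n := by omega
  have hidx1 : ∀ i : Fin m, (i : ℕ) + 3 * t < n := fun i => by
    have := i.isLt; omega
  set fA : (Fin n → F) → (Fin m → F) := fun c i => c ⟨(i : ℕ) + 3 * t, hidx1 i⟩ with hfA
  set fG : (Fin n → F) → (Fin m → F) := fun c i =>
    if _ : (i : ℕ) < t then c ⟨(i : ℕ), by omega⟩
    else c ⟨(i : ℕ) + 3 * t, hidx1 i⟩ with hfG
  -- transfer lemmas
  have hA : ∀ c c' : Fin n → F, fA c = fA c' → ∀ j : Fin n, 3 * t ≤ (j : ℕ) → c j = c' j := by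
    intro c c' h j hj
    have hjm : (j : ℕ) - 3 * t < m := by have := j.isLt; omega
    have h1 := congrFun h ⟨(j : ℕ) - 3 * t, hjm⟩
    simp only [hfA] at h1
    have hjj : (⟨((j : ℕ) - 3 * t) + 3 * t, hidx1 ⟨(j : ℕ) - 3 * t, hjm⟩⟩ : Fin n) = j :=
      Fin.ext (by simp; omega)
    rwa [hjj] at h1
  have hG1 : ∀ c c' : Fin n → F, fG c = fG c' → ∀ j : Fin n, (j : ℕ) < t → c j = c' j := by
    intro c c' h j hj
    have hjm : (j : ℕ) < m := by omega
    have h1 := congrFun h ⟨(j : ℕ), hjm⟩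
    simp only [hfG] at h1
    rw [dif_pos hj, dif_pos hj] at h1
    have hjj : (⟨(j : ℕ), by omega⟩ : Fin n) = j := Fin.ext rfl
    rwa [hjj] at h1
  have hG2 : ∀ c c' : Fin n → F, fG c = fG c' → ∀ j : Fin n, 4 * t ≤ (j : ℕ) → c j = c' j := by
    intro c c' h j hj
    have hjm : (j : ℕ) - 3 * t < m := by have := j.isLt; omega
    have h1 := congrFun h ⟨(j : ℕ) - 3 * t, hjm⟩
    simp only [hfG] at h1
    have hnt : ¬ (((⟨(j : ℕ) - 3 * t, hjm⟩ : Fin m) : ℕ) < t) := by simp; omega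
    rw [dif_neg hnt, dif_neg hnt] at h1
    have hjj : (⟨((j : ℕ) - 3 * t) + 3 * t, hidx1 ⟨(j : ℕ) - 3 * t, hjm⟩⟩ : Fin n) = j :=
      Fin.ext (by simp; omega)
    rwa [hjj] at h1
  -- the code as a finset
  have hCfin : C.Finite := Set.toFinite C
  set s := hCfin.toFinset with hs
  have hmem : ∀ x ∈ s, x ∈ C := fun x hx => hCfin.mem_toFinset.mp hx
  -- the key exclusion
  have hyp : ∀ c0 ∈ s, ∀ c1 ∈ s, ∀ c2 ∈ s, c0 ≠ c1 → c0 ≠ c2 → c1 ≠ c2 →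
      fA c0 = fA c1 → fG c0 = fG c2 → False := by
    intro c0 h0 c1 h1 c2 h2 d01 d02 d12 eA eG
    set y : Fin n → F := fun j =>
      if (j : ℕ) < t then c0 j else if (j : ℕ) < 2 * t then c2 j
      else if (j : ℕ) < 3 * t then c1 j else c0 j with hy
    have hz0 : ∀ j : Fin n, ((j : ℕ) < t ∨ 3 * t ≤ (j : ℕ)) → y j = c0 j := by
      intro j hj
      rcases hj with hj | hj
      · simp [hy, hj]
      · have h1' : ¬ ((j : ℕ) < t) := by omega
        have h2' : ¬ ((j : ℕ) < 2 * t) := by omega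
        have h3' : ¬ ((j : ℕ) < 3 * t) := by omega
        simp [hy, h1', h2', h3']
    have hz1 : ∀ j : Fin n, 2 * t ≤ (j : ℕ) → y j = c1 j := by
      intro j hj
      by_cases h3' : (j : ℕ) < 3 * t
      · have h1' : ¬ ((j : ℕ) < t) := by omega
        have h2' : ¬ ((j : ℕ) < 2 * t) := by omega
        simp [hy, h1', h2', h3']
      · rw [hz0 j (Or.inr (by omega))]
        exact hA c0 c1 eA j (by omega)
    have hz2 : ∀ j : Fin n, ((j : ℕ) < 2 * t ∨ 4 * t ≤ (j : ℕ)) → y j = c2 j := by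
      intro j hj
      rcases hj with hj | hj
      · by_cases h1' : (j : ℕ) < t
        · rw [hz0 j (Or.inl h1')]
          exact hG1 c0 c2 eG j h1'
        · simp [hy, h1', hj]
      · rw [hz0 j (Or.inr (by omega))]
        exact hG2 c0 c2 eG j hj
    have hb0 : IsBurst (2 * t) (y - c0) := by
      refine ⟨t, fun j hj => ⟨?_, ?_⟩⟩
      · by_contra hcon
        exact hj (by rw [Pi.sub_apply, hz0 j (Or.inl (by omega)), sub_self])
      · by_contra hcon
        exact hj (by rw [Pi.sub_apply, hz0 j (Or.inr (by omega)), sub_self])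
    have hb1 : IsBurst (2 * t) (y - c1) := by
      refine ⟨0, fun j hj => ⟨Nat.zero_le _, ?_⟩⟩
      by_contra hcon
      exact hj (by rw [Pi.sub_apply, hz1 j (by omega), sub_self])
    have hb2 : IsBurst (2 * t) (y - c2) := by
      refine ⟨2 * t, fun j hj => ⟨?_, ?_⟩⟩
      · by_contra hcon
        exact hj (by rw [Pi.sub_apply, hz2 j (Or.inl (by omega)), sub_self])
      · by_contra hcon
        exact hj (by rw [Pi.sub_apply, hz2 j (Or.inr (by omega)), sub_self])
    have key : ∀ c : Fin n → F, c ∈ C → IsBurst (2 * t) (y - c) → c ∈ D y := by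
      intro c hc hb
      have h' := hDcorr c hc (y - c) hb
      have hcy : c + (y - c) = y := by abel
      rwa [hcy] at h'
    have m0 : c0 ∈ D y := key c0 (hmem _ h0) hb0
    have m1 : c1 ∈ D y := key c1 (hmem _ h1) hb1
    have m2 : c2 ∈ D y := key c2 (hmem _ h2) hb2
    have hsub : ({c0, c1, c2} : Finset (Fin n → F)) ⊆ D y :=
      Finset.insert_subset_iff.mpr ⟨m0, Finset.insert_subset_iff.mpr
        ⟨m1, Finset.singleton_subset_iff.mpr m2⟩⟩
    have hcard3 : ({c0, c1, c2} : Finset (Fin n → F)).card = 3 := by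
      rw [Finset.card_insert_of_notMem (by simp [d01, d02]),
        Finset.card_insert_of_notMem (by simp [d12]), Finset.card_singleton]
    have hle := Finset.card_le_card hsub
    have hDy := hDcard y
    omega
  have main := aux_count s fA fG hyp
  have hcardfun : Fintype.card (Fin m → F) = Fintype.card F ^ m := by
    simp [Fintype.card_fun]
  have hncard : C.ncard = s.card := Set.ncard_eq_toFinset_card C hCfin
  have hexp : n - (2 * t + 2 * t / 2) = m := by omega
  rw [hexp, hncard]
  omega
end

section
/- With the setup of the generalized resultant (F = GF(q), α of multiplicative order at least r, positive μ_0,…,μ_ℓ summing to r, τ_i = r − μ_i, echelon matrices A_i(β_i) built from the coefficients of M_i(x;β_i) = Π_{j=0}^{τ_i−1}(x − β_i α^j), and A(β) their stacking), the multivariate polynomial Δ(β) = det(A(β)) in the indeterminates β_0, …, β_ℓ is not identically zero; in particular, Δ evaluated at β*_i = α^{μ_0 + μ_1 + ⋯ + μ_i} (for 0 ≤ i ≤ ℓ) is nonzero. -/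
/-!
At `β*` the polynomial `M_i` becomes `∏_{j < τ_i} (x - α^(S_{i+1} + j))` with
`S_i = μ_0 + ⋯ + μ_{i-1}`, and a row vector in the left kernel of `A(β*)` is a relation
`Σ_i q_i M_i = 0` with `deg q_i < μ_i`. Since `α` has order at least `r`, the `μ_i` distinct
points `α^m`, `S_i ≤ m < S_{i+1}`, are roots of every `M_j` with `j < i` but of no factor of `M_i`.
Going down from `i = ℓ`, each `q_i` therefore vanishes at `μ_i` points and is zero, so
`det A(β*) ≠ 0`, and a fortiori `Δ ≠ 0`.
-/

/-- The polynomial `M_i(x; β_i) = Π_{j=0}^{τ_i - 1} (x - β_i α^j)`, `τ_i = r - μ_i`,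
viewed as a univariate polynomial in `x` whose coefficients are multivariate
polynomials over `F` in the indeterminates `β_0, …, β_ℓ`. -/
noncomputable def burstM (F : Type*) [Field F] (ℓ r : ℕ) (α : F)
    (μ : Fin (ℓ + 1) → ℕ) (i : Fin (ℓ + 1)) :
    Polynomial (MvPolynomial (Fin (ℓ + 1)) F) :=
  ∏ j ∈ Finset.range (r - μ i),
    (Polynomial.X - Polynomial.C (MvPolynomial.C (α ^ j) * MvPolynomial.X i))

/-- The `r × r` matrix `A(β)` obtained by stacking the `μ_i × r` echelon
matrices `A_i(β_i)`: rows `s` with `Σ_{k<i} μ_k ≤ s < Σ_{k≤i} μ_k` belong to the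
`i`-th block; such a row, with offset `h = s - Σ_{k<i} μ_k`, carries the
coefficients `M_{i,0}, …, M_{i,τ_i}` of `M_i(x; β_i)` in columns `h, …, h + τ_i`
and zeros elsewhere. (Exactly one summand below is nonzero for each row.) -/
noncomputable def burstA (F : Type*) [Field F] (ℓ r : ℕ) (α : F)
    (μ : Fin (ℓ + 1) → ℕ) :
    Matrix (Fin r) (Fin r) (MvPolynomial (Fin (ℓ + 1)) F) :=
  Matrix.of fun s j =>
    ∑ i : Fin (ℓ + 1),
      if (∑ k ∈ Finset.Iio i, μ k) ≤ (s : ℕ) ∧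
          (s : ℕ) < (∑ k ∈ Finset.Iio i, μ k) + μ i ∧
          (s : ℕ) - (∑ k ∈ Finset.Iio i, μ k) ≤ (j : ℕ) then
        (burstM F ℓ r α μ i).coeff
          ((j : ℕ) - ((s : ℕ) - ∑ k ∈ Finset.Iio i, μ k))
      else 0

open Polynomial Finset

theorem pow_ne_pow_of_lt_of_sub_lt_orderOf {G : Type*} [Monoid G] {x : G} {a b : ℕ}
    (hab : a < b) (hba : b - a < orderOf x) : x ^ a ≠ x ^ b := by
  have hx : IsOfFinOrder x := orderOf_pos_iff.mp (by omega)
  rw [Ne, hx.pow_eq_pow_iff_modEq, Nat.modEq_iff_dvd' hab.le]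
  exact fun h => absurd (Nat.le_of_dvd (by omega) h) (by omega)

theorem val_finSigmaFinEquiv {m : ℕ} {n : Fin m → ℕ} (k : (i : Fin m) × Fin (n i)) :
    (finSigmaFinEquiv k : ℕ) = ∑ i ∈ Iio k.1, n i + k.2 := by
  have : Iio k.1 = univ.map (Fin.castLEEmb k.1.2.le) := by
    ext i
    simp only [mem_Iio, mem_map, mem_univ, true_and, Fin.castLEEmb_apply]
    exact ⟨fun h => ⟨⟨i, h⟩, rfl⟩, by rintro ⟨j, rfl⟩; exact j.2⟩
  rw [finSigmaFinEquiv_apply, this, sum_map]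
  rfl

theorem eq_zero_of_sum_mul_eq_zero_of_triangular {R ι κ : Type*} [CommRing R] [IsDomain R]
    [Fintype ι] [LinearOrder ι] {M q : ι → R[X]} {x : κ → R} {T : ι → Finset κ}
    (hinj : ∀ i, Set.InjOn x (T i)) (hdeg : ∀ i, (q i).degree < #(T i))
    (hroot : ∀ i j, j < i → ∀ t ∈ T i, (M j).eval (x t) = 0)
    (hnonroot : ∀ i, ∀ t ∈ T i, (M i).eval (x t) ≠ 0)
    (hsum : ∑ i, q i * M i = 0) (i : ι) : q i = 0 := by
  induction i using WellFoundedGT.induction with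
  | _ i ih =>
  refine eq_zero_of_degree_lt_of_eval_index_eq_zero _ (hinj i) (hdeg i) fun t ht => ?_
  have hprod : (q i).eval (x t) * (M i).eval (x t) = 0 := by
    calc (q i).eval (x t) * (M i).eval (x t) = ∑ j, (q j * M j).eval (x t) := by
          rw [sum_eq_single i, eval_mul]
          · intro j _ hji
            rcases hji.lt_or_gt with hlt | hgt
            · rw [eval_mul, hroot i j hlt t ht, mul_zero]
            · rw [ih j hgt, zero_mul, eval_zero]
          · simp
      _ = 0 := by rw [← eval_finsetSum, hsum, eval_zero]
  exact (mul_eq_zero.mp hprod).resolve_right (hnonroot i t ht)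

theorem linearIndependent_X_pow_mul_of_triangular {R ι κ : Type*} [CommRing R] [IsDomain R]
    [Fintype ι] [LinearOrder ι] {M : ι → R[X]} {x : κ → R} {T : ι → Finset κ} {μ : ι → ℕ}
    (hinj : ∀ i, Set.InjOn x (T i)) (hcard : ∀ i, #(T i) = μ i)
    (hroot : ∀ i j, j < i → ∀ t ∈ T i, (M j).eval (x t) = 0)
    (hnonroot : ∀ i, ∀ t ∈ T i, (M i).eval (x t) ≠ 0) :
    LinearIndependent R (fun k : (i : ι) × Fin (μ i) => X ^ (k.2 : ℕ) * M k.1) := by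
  rw [Fintype.linearIndependent_iff]
  rintro g hg ⟨i, h⟩
  set q : ι → R[X] := fun i => ∑ h : Fin (μ i), C (g ⟨i, h⟩) * X ^ (h : ℕ)
  have hq : ∀ i, q i = 0 := by
    refine eq_zero_of_sum_mul_eq_zero_of_triangular hinj (fun i => ?_) hroot hnonroot ?_
    · rw [hcard]; exact degree_sum_fin_lt _
    · rw [← hg, Fintype.sum_sigma]
      simp [q, sum_mul, smul_eq_C_mul, mul_assoc]
  simpa [q, finsetSum_coeff, coeff_C_mul_X_pow, Fin.val_inj] using congr_arg (coeff · h) (hq i)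

theorem det_of_coeff_ne_zero_of_linearIndependent {K : Type*} [Field K] {n : ℕ} {p : Fin n → K[X]}
    (hdeg : ∀ s, (p s).degree < n) (hp : LinearIndependent K p) :
    (Matrix.of fun s j : Fin n => (p s).coeff j).det ≠ 0 := by
  rw [Ne, ← Matrix.exists_vecMul_eq_zero_iff]
  rintro ⟨v, hv, hvM⟩
  refine hv (funext (Fintype.linearIndependent_iff.mp hp v ?_))
  ext j
  rw [finsetSum_coeff, coeff_zero]
  by_cases hj : j < n
  · simpa [Matrix.vecMul, dotProduct] using congr_fun hvM ⟨j, hj⟩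
  · refine sum_eq_zero fun s _ => ?_
    have hjn : (n : WithBot ℕ) ≤ j := by exact_mod_cast not_lt.mp hj
    rw [coeff_smul, coeff_eq_zero_of_degree_lt ((hdeg s).trans_le hjn), smul_zero]

theorem sum_Iio_add_le_sum_Iio {ι : Type*} [PartialOrder ι] [LocallyFiniteOrderBot ι]
    (f : ι → ℕ) {i j : ι} (hij : i < j) : ∑ k ∈ Iio i, f k + f i ≤ ∑ k ∈ Iio j, f k := by
  rw [sum_Iio_add_eq_sum_Iic]
  exact sum_le_sum_of_subset fun _ hk => mem_Iio.mpr ((mem_Iic.mp hk).trans_lt hij)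

theorem degree_X_pow_mul_prod_X_sub_C_lt {K : Type*} [CommRing K] [Nontrivial K] (f : ℕ → K)
    {h n r : ℕ} (hh : h < n) (hn : n ≤ r) :
    (X ^ h * ∏ j ∈ range (r - n), (X - C (f j))).degree < r := by
  refine degree_le_natDegree.trans_lt (Nat.cast_lt.mpr ?_)
  calc _ ≤ (X ^ h : K[X]).natDegree + (∏ j ∈ range (r - n), (X - C (f j))).natDegree :=
        natDegree_mul_le
    _ = h + (r - n) := by rw [natDegree_X_pow, natDegree_finsetProd_X_sub_C_eq_card, card_range]
    _ < r := by omega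

section Burst

variable {F : Type*} [Field F] {ℓ r : ℕ} {α : F} {μ : Fin (ℓ + 1) → ℕ}

theorem burstA_apply_of_block {s : Fin r} {i : Fin (ℓ + 1)} {h : ℕ}
    (hs : (s : ℕ) = ∑ k ∈ Iio i, μ k + h) (hh : h < μ i) (j : Fin r) :
    burstA F ℓ r α μ s j = (X ^ h * burstM F ℓ r α μ i).coeff j := by
  rw [burstA, Matrix.of_apply, sum_eq_single i, coeff_X_pow_mul']
  · simp only [hs, Nat.add_sub_cancel_left, Nat.le_add_right, Nat.add_lt_add_iff_left, hh,
      true_and]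
  · intro i' _ hi'
    rw [if_neg]
    rintro ⟨h1, h2, -⟩
    rcases hi'.lt_or_gt with hlt | hlt <;> have := sum_Iio_add_le_sum_Iio μ hlt <;> omega
  · simp

theorem map_eval_burstM (β : Fin (ℓ + 1) → F) (i : Fin (ℓ + 1)) :
    (burstM F ℓ r α μ i).map (MvPolynomial.eval β) =
      ∏ j ∈ range (r - μ i), (X - C (α ^ j * β i)) := by
  simp [burstM, Polynomial.map_prod]

theorem linearIndependent_burstRows (hord : r ≤ orderOf α) (hsum : ∑ i, μ i = r) :
    LinearIndependent F (fun k : (i : Fin (ℓ + 1)) × Fin (μ i) =>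
      X ^ (k.2 : ℕ) * ∏ j ∈ range (r - μ k.1), (X - C (α ^ j * α ^ ∑ k' ∈ Iic k.1, μ k'))) := by
  have hlast : ∀ i, ∑ k ∈ Iic i, μ k ≤ r := fun i => hsum ▸ sum_le_sum_of_subset (subset_univ _)
  have hIic := sum_Iio_add_eq_sum_Iic (f := μ)
  refine linearIndependent_X_pow_mul_of_triangular (μ := μ) (x := (α ^ ·))
    (M := fun i => ∏ j ∈ range (r - μ i), (X - C (α ^ j * α ^ ∑ k ∈ Iic i, μ k)))
    (T := fun i => Ico (∑ k ∈ Iio i, μ k) (∑ k ∈ Iic i, μ k)) (fun i => ?_) (fun i => ?_) ?_ ?_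
  · exact pow_injOn_Iio_orderOf.mono fun m hm => (mem_Ico.mp hm).2.trans_le ((hlast i).trans hord)
  · simp [← hIic]
  · intro i j hji m hm
    have := mem_Ico.mp hm
    have := sum_Iio_add_le_sum_Iio μ hji
    have := hlast i
    have := hIic j
    simp only [eval_prod, eval_sub, eval_X, eval_C, ← pow_add]
    refine prod_eq_zero (i := m - ∑ k ∈ Iic j, μ k) (mem_range.mpr (by omega)) ?_
    rw [Nat.sub_add_cancel (by omega), sub_self]
  · intro i m hm
    have := mem_Ico.mp hm
    have := hlast i
    have := hIic i
    simp only [eval_prod, eval_sub, eval_X, eval_C, ← pow_add, prod_ne_zero_iff, sub_ne_zero,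
      mem_range]
    exact fun t ht => pow_ne_pow_of_lt_of_sub_lt_orderOf (by omega) (by omega)

end Burst

theorem generalized_resultant_ne_zero_general (F : Type*) [Field F]
    (ℓ r : ℕ) (α : F) (hord : r ≤ orderOf α)
    (μ : Fin (ℓ + 1) → ℕ) (hsum : ∑ i, μ i = r) :
    (burstA F ℓ r α μ).det ≠ 0 ∧
      MvPolynomial.eval (fun i => α ^ (∑ k ∈ Finset.Iic i, μ k))
        (burstA F ℓ r α μ).det ≠ 0 := by
  set β : Fin (ℓ + 1) → F := fun i => α ^ (∑ k ∈ Finset.Iic i, μ k)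
  suffices hβ : MvPolynomial.eval β (burstA F ℓ r α μ).det ≠ 0 from
    ⟨fun h0 => hβ (by rw [h0, map_zero]), hβ⟩
  let e : Fin r ≃ (i : Fin (ℓ + 1)) × Fin (μ i) :=
    (finCongr hsum.symm).trans finSigmaFinEquiv.symm
  let p : (i : Fin (ℓ + 1)) × Fin (μ i) → F[X] := fun k =>
    X ^ (k.2 : ℕ) * ∏ j ∈ range (r - μ k.1), (X - C (α ^ j * β k.1))
  have hrows : (burstA F ℓ r α μ).map (MvPolynomial.eval β) =
      Matrix.of fun s (j : Fin r) => (p (e s)).coeff j := by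
    ext s j
    have hs : (s : ℕ) = ∑ k ∈ Iio (e s).1, μ k + (e s).2 := by
      rw [← val_finSigmaFinEquiv]
      simp [e]
    rw [Matrix.map_apply, burstA_apply_of_block hs (e s).2.2, ← coeff_map, Polynomial.map_mul,
      Polynomial.map_pow, map_X, map_eval_burstM, Matrix.of_apply]
  rw [RingHom.map_det, RingHom.mapMatrix_apply, hrows]
  refine det_of_coeff_ne_zero_of_linearIndependent (fun s => ?_)
    ((linearIndependent_burstRows hord hsum).comp e e.injective)
  exact degree_X_pow_mul_prod_X_sub_C_lt _ (e s).2.2 (hsum ▸ single_le_sum (by simp) (mem_univ _))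

/-- The multivariate polynomial `Δ(β) = det A(β)` is not
identically zero; in particular its evaluation at
`β*_i = α^{μ_0 + μ_1 + ⋯ + μ_i}` is nonzero. -/
theorem generalized_resultant_ne_zero (F : Type*) [Field F] [Fintype F]
    (ℓ r : ℕ) (hr : 1 ≤ r) (α : F) (hα : α ≠ 0) (hord : r ≤ orderOf α)
    (μ : Fin (ℓ + 1) → ℕ) (hμ : ∀ i, 1 ≤ μ i) (hsum : ∑ i, μ i = r) :
    (burstA F ℓ r α μ).det ≠ 0 ∧
      MvPolynomial.eval (fun i => α ^ (∑ k ∈ Finset.Iic i, μ k))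
        (burstA F ℓ r α μ).det ≠ 0 :=
  generalized_resultant_ne_zero_general F ℓ r α hord μ hsum
end

section
/- With the setup of the generalized resultant (F = GF(q), α of multiplicative order at least r, positive μ_0,…,μ_ℓ summing to r, τ_i = r − μ_i, echelon matrices A_i(β_i) built from the coefficients of M_i(x;β_i) = Π_{j=0}^{τ_i−1}(x − β_i α^j), and A(β) their stacking), for every pair of distinct indices i, k ∈ {0, 1, …, ℓ}, the multivariate polynomial Δ(β) = det(A(β)) is divisible, in the polynomial ring F[β_0, …, β_ℓ], by Π_{t=0}^{μ_k−1} (β_k − β_i α^t)^{min{μ_i, μ_k − t}}. -/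
/-!
Fix `t < μ_k` and put `m = min(μ_i, μ_k - t)`. Substituting `β_k = ε + α^t β_i` turns `Δ` into a
polynomial in `ε`, and it suffices to show that `ε^m` divides it: evaluating back at
`ε = β_k - α^t β_i` then gives `(β_k - α^t β_i)^m ∣ Δ`, and these linear forms are pairwise
non-associated primes because `α^0, …, α^(μ_k - 1)` are distinct.

Modulo `ε`, the rows of block `k` are the coefficient vectors of `x^h ∏_{j<τ_k} (x - α^(t+j) β_i)`
and those of block `i` of `x^h ∏_{j<τ_i} (x - α^j β_i)`. These two products share the factor
`∏_{t ≤ j < t+d} (x - α^j β_i)` with `d = τ_i + m - μ_k`, which yields polynomials `Q` (monic of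
degree `μ_k - m`) and `P` (of degree `μ_i - m`) with `Q M_k ≡ P M_i (mod ε)`. Replacing the last `m`
rows of block `k` by the coefficient vectors of `x^h (Q M_k - P M_i)`, `h < m`, is a unitriangular
row operation, and produces `m` rows divisible by `ε`.
-/

open Finset Polynomial

theorem Finset.prod_pow_dvd_of_prime {M ι : Type*} [CommMonoidWithZero M] [IsCancelMulZero M]
    {s : Finset ι} {p : ι → M} {n : ι → ℕ} {a : M} (hp : ∀ t ∈ s, Prime (p t))
    (hdvd : (s : Set ι).Pairwise fun t u => ¬p t ∣ p u) (h : ∀ t ∈ s, p t ^ n t ∣ a) :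
    ∏ t ∈ s, p t ^ n t ∣ a := by
  classical
  induction s using Finset.induction_on with
  | empty => simp
  | insert t s hts ih =>
    rw [coe_insert, Set.pairwise_insert] at hdvd
    obtain ⟨b, rfl⟩ := ih (fun u hu => hp u (mem_insert_of_mem hu)) hdvd.1
      (fun u hu => h u (mem_insert_of_mem hu))
    have hpt := hp t (mem_insert_self t s)
    have hcop : ¬p t ∣ ∏ u ∈ s, p u ^ n u := fun hdiv => by
      obtain ⟨u, hu, hdu⟩ := hpt.exists_mem_finset_dvd hdiv
      exact (hdvd.2 u hu (ne_of_mem_of_not_mem hu hts).symm).1 (hpt.dvd_of_dvd_pow hdu)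
    rw [prod_insert hts, mul_comm]
    exact mul_dvd_mul_left _ (hpt.pow_dvd_of_dvd_mul_left _ hcop (h t (mem_insert_self t s)))

theorem Finset.prod_range_mul_prod_Ico_mul_prod_Ico {M : Type*} [CommMonoid M] (L : ℕ → M)
    {t c e e' : ℕ} (htc : t ≤ c) (hce : c ≤ e) (hce' : c ≤ e') :
    (∏ j ∈ range t, L j) * (∏ j ∈ Ico c e, L j) * ∏ j ∈ Ico t e', L j
      = (∏ j ∈ Ico c e', L j) * ∏ j ∈ range e, L j := by
  rw [← prod_Ico_consecutive L htc hce', ← prod_range_mul_prod_Ico L (htc.trans hce),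
    ← prod_Ico_consecutive L htc hce]
  ac_rfl

theorem Matrix.pow_card_dvd_det_of_dvd_rows {n R : Type*} [Fintype n] [DecidableEq n] [CommRing R]
    (M : Matrix n n R) (x : R) (T : Finset n) (hT : ∀ s ∈ T, ∀ j, x ∣ M s j) :
    x ^ T.card ∣ M.det := by
  choose D hD using hT
  let N : Matrix n n R := Matrix.of fun s j => if h : s ∈ T then D s h j else M s j
  have hM : M = Matrix.of fun s j => (if s ∈ T then x else 1) * N s j := by
    ext s j
    by_cases hs : s ∈ T <;> simp [N, hs, hD]
  rw [hM, det_mul_column, prod_ite_mem, univ_inter, prod_const]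
  exact dvd_mul_right _ _

theorem Polynomial.sum_coeff_mul_coeff_X_pow_mul {R : Type*} [Semiring R] (G f : R[X]) {n : ℕ}
    (hG : G.natDegree < n) (j : ℕ) :
    ∑ o ∈ range n, G.coeff o * (X ^ o * f).coeff j = (G * f).coeff j := by
  conv_rhs => rw [G.as_sum_range' n hG, sum_mul, finsetSum_coeff]
  refine sum_congr rfl fun o _ => ?_
  rw [← C_mul_X_pow_eq_monomial, mul_assoc, coeff_C_mul]

theorem Polynomial.coeff_X_pow_add_mul_eq_zero {R : Type*} [Semiring R] {V : R[X]} {b q h n : ℕ}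
    (hV : h + V.natDegree < q) (hn : n < b ∨ b + q ≤ n) : (X ^ (b + h) * V).coeff n = 0 := by
  rw [coeff_X_pow_mul', ite_eq_right_iff]
  exact fun _ => coeff_eq_zero_of_natDegree_lt (by omega)

namespace Matrix

variable {S : Type*} [CommRing S] {r : ℕ}

structure ShiftedCoeffRows (B : Matrix (Fin r) (Fin r) S) (a p : ℕ) (f : S[X]) : Prop where
  add_le : a + p ≤ r
  apply_eq : ∀ s : Fin r, a ≤ s → s < a + p → ∀ j : Fin r, B s j = (X ^ (s - a) * f).coeff j

variable {B : Matrix (Fin r) (Fin r) S} {a p : ℕ} {f : S[X]}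

theorem ShiftedCoeffRows.map {S' : Type*} [CommRing S'] (h : B.ShiftedCoeffRows a p f)
    (φ : S →+* S') : (B.map φ).ShiftedCoeffRows a p (f.map φ) where
  add_le := h.add_le
  apply_eq s hs hs' j := by
    rw [map_apply, h.apply_eq s hs hs' j, ← coeff_map, Polynomial.map_mul, Polynomial.map_pow,
      map_X]

theorem ShiftedCoeffRows.sum_coeff_mul (h : B.ShiftedCoeffRows a p f) {G : S[X]}
    (hG : G.natDegree < p) (j : Fin r) :
    ∑ u : Fin r, (X ^ a * G).coeff u * B u j = (G * f).coeff j := by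
  have hap := h.add_le
  let e : Fin p ↪ Fin r :=
    ⟨fun o => ⟨a + o, by omega⟩, fun o o' h => Fin.ext (Nat.add_left_cancel (congrArg Fin.val h))⟩
  have he : ∀ o, (e o : ℕ) = a + o := fun o => rfl
  calc ∑ u : Fin r, (X ^ a * G).coeff u * B u j
      = ∑ u ∈ univ.map e, (X ^ a * G).coeff u * B u j := by
        refine (sum_subset (subset_univ _) fun u _ hu => ?_).symm
        rw [coeff_X_pow_mul', ite_eq_right_iff.2, zero_mul]
        intro hau
        refine coeff_eq_zero_of_natDegree_lt ?_
        by_contra! hlt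
        exact hu (mem_map.2
          ⟨⟨u - a, by omega⟩, mem_univ _, Fin.ext (by rw [he, Fin.val_mk]; omega)⟩)
    _ = ∑ o : Fin p, G.coeff o * (X ^ (o : ℕ) * f).coeff j := by
        refine (sum_map _ _ _).trans (sum_congr rfl fun o _ => ?_)
        rw [h.apply_eq _ (by rw [he]; omega) (by rw [he]; omega), coeff_X_pow_mul', he,
          if_pos (by omega), add_tsub_cancel_left]
    _ = (G * f).coeff j := by
        rw [← sum_coeff_mul_coeff_X_pow_mul G f hG, sum_range]

noncomputable def combineRows (a b m : ℕ) (U V : S[X]) : Matrix (Fin r) (Fin r) S :=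
  of fun s u =>
    if a + U.natDegree ≤ s ∧ s < a + U.natDegree + m then
      (X ^ (a + (s - (a + U.natDegree))) * U - X ^ (b + (s - (a + U.natDegree))) * V).coeff u
    else (1 : Matrix (Fin r) (Fin r) S) s u

variable {b q m : ℕ} {U V : S[X]}

theorem combineRows_apply_of_le_of_lt (s u : Fin r) (hs : a + U.natDegree ≤ s)
    (hs' : s < a + U.natDegree + m) :
    combineRows a b m U V s u = (X ^ (a + (s - (a + U.natDegree))) * U).coeff u
      - (X ^ (b + (s - (a + U.natDegree))) * V).coeff u := by
  simp only [combineRows, of_apply, if_pos (And.intro hs hs'), coeff_sub]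

theorem det_combineRows (hU : U.Monic) (hUm : U.natDegree + m ≤ p) (hVm : V.natDegree + m ≤ q)
    (hdisj : a + p ≤ b ∨ b + q ≤ a) :
    (combineRows a b m U V : Matrix (Fin r) (Fin r) S).det = 1 := by
  let P : Fin r → Prop := fun s => a + U.natDegree ≤ s ∧ s < a + U.natDegree + m
  have hP : ∀ s u : Fin r, P s → P u → combineRows a b m U V s u
      = (X ^ (a + (s - (a + U.natDegree))) * U).coeff u := fun s u ⟨hs, hs'⟩ ⟨_, _⟩ => by
    rw [combineRows_apply_of_le_of_lt s u hs hs',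
      coeff_X_pow_add_mul_eq_zero (V := V) (b := b) (q := q) (by omega) (by omega),
      sub_zero]
  rw [twoBlockTriangular_det _ P fun s hs u hu => by
    simp [combineRows, P, hs, one_apply_ne (fun h : s = u => hs (h ▸ hu))]]
  have hid : toSquareBlockProp (combineRows a b m U V) (fun s => ¬P s) = 1 := by
    ext s u
    simp [toSquareBlockProp_def, combineRows, P, s.2, one_apply, Subtype.ext_iff]
  rw [hid, det_one, mul_one, det_of_isLowerTriangular]
  · refine prod_eq_one fun s _ => ?_
    have hs := s.2
    rw [toSquareBlockProp_def, of_apply, hP _ _ s.2 s.2, coeff_X_pow_mul', if_pos (by omega),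
      ← hU.coeff_natDegree]
    congr 1
    omega
  · intro s u hsu
    have hsu' : (s : ℕ) < u := OrderDual.toDual_lt_toDual.1 hsu
    rw [toSquareBlockProp_def, of_apply, hP _ _ s.2 u.2, coeff_X_pow_mul', ite_eq_right_iff]
    exact fun _ => coeff_eq_zero_of_natDegree_lt (by omega)

theorem combineRows_mul_apply {g : S[X]} (hf : B.ShiftedCoeffRows a p f)
    (hg : B.ShiftedCoeffRows b q g) (hUm : U.natDegree + m ≤ p) (hVm : V.natDegree + m ≤ q)
    (s : Fin r) (hs : a + U.natDegree ≤ s) (hs' : s < a + U.natDegree + m) (j : Fin r) :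
    (combineRows a b m U V * B : Matrix (Fin r) (Fin r) S) s j
      = (X ^ (s - (a + U.natDegree)) * (U * f - V * g)).coeff j := by
  have hdeg : ∀ W : S[X],
      (X ^ (s - (a + U.natDegree)) * W).natDegree ≤ s - (a + U.natDegree) + W.natDegree :=
    fun W => natDegree_mul_le.trans (Nat.add_le_add_right (natDegree_X_pow_le _) _)
  simp_rw [mul_apply, combineRows_apply_of_le_of_lt _ _ hs hs', sub_mul, sum_sub_distrib,
    pow_add, mul_assoc]
  rw [hf.sum_coeff_mul ((hdeg U).trans_lt (by omega)),
    hg.sum_coeff_mul ((hdeg V).trans_lt (by omega)), mul_sub, coeff_sub, mul_assoc,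
    mul_assoc]

theorem pow_dvd_det_of_shiftedCoeffRows {g : S[X]} (x : S) (hf : B.ShiftedCoeffRows a p f)
    (hg : B.ShiftedCoeffRows b q g) (hdisj : a + p ≤ b ∨ b + q ≤ a) (hU : U.Monic)
    (hUm : U.natDegree + m ≤ p) (hVm : V.natDegree + m ≤ q)
    (hx : ∀ j, x ∣ (U * f - V * g).coeff j) : x ^ m ∣ B.det := by
  have hp := hf.add_le
  let T : Finset (Fin r) :=
    (Ico (a + U.natDegree) (a + U.natDegree + m)).attachFin fun n hn => by
      rw [mem_Ico] at hn; omega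
  have hT : T.card = m := by simp [T]
  have hdvd : x ^ T.card ∣ (combineRows a b m U V * B).det :=
    pow_card_dvd_det_of_dvd_rows _ x T fun s hs j => by
      obtain ⟨hs, hs'⟩ := mem_Ico.1 ((mem_attachFin _).1 hs)
      rw [combineRows_mul_apply hf hg hUm hVm s hs hs' j, coeff_X_pow_mul']
      split_ifs
      · exact hx _
      · exact dvd_zero x
  rwa [hT, det_mul, det_combineRows hU hUm hVm hdisj, one_mul] at hdvd

end Matrix

namespace MvPolynomial

variable {R σ : Type*} [CommRing R] [DecidableEq σ]

noncomputable def shear (c : R) (i k : σ) : MvPolynomial σ R →ₐ[R] MvPolynomial σ R :=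
  aeval (Function.update X k (X k + C c * X i))

theorem shear_comp_shear {c c' : R} (hcc' : c + c' = 0) {i k : σ} (hik : i ≠ k) :
    (shear c i k).comp (shear c' i k) = AlgHom.id R _ := by
  refine algHom_ext fun j => ?_
  obtain rfl | hjk := eq_or_ne j k
  · simp [shear, hik, add_assoc, ← add_mul, ← C_add, hcc']
  · simp [shear, hjk]

theorem prime_X_sub_C_mul_X [IsDomain R] (c : R) {i k : σ} (hik : i ≠ k) :
    Prime (X k - C c * X i : MvPolynomial σ R) := by
  let e : MvPolynomial σ R ≃ₐ[R] MvPolynomial σ R :=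
    AlgEquiv.ofAlgHom (shear (-c) i k) (shear c i k) (shear_comp_shear (neg_add_cancel c) hik)
      (shear_comp_shear (add_neg_cancel c) hik)
  have he : e (X k) = X k - C c * X i := by simp [e, shear, sub_eq_add_neg]
  rw [← he, MulEquiv.prime_iff]
  exact X_prime

/-- `p(β_k := ε + c β_i)` as a polynomial in `ε`: the power of `ε` dividing it is the multiplicity
of `β_k - c β_i` in `p`. -/
noncomputable def expandAround (c : R) (i k : σ) :
    MvPolynomial σ R →ₐ[R] Polynomial (MvPolynomial σ R) :=
  aeval (Function.update (fun j => Polynomial.C (X j)) k (Polynomial.X + Polynomial.C (C c * X i)))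

@[simp]
theorem expandAround_X_self (c : R) (i k : σ) :
    expandAround c i k (X k) = Polynomial.X + Polynomial.C (C c * X i) := by
  simp [expandAround]

@[simp]
theorem expandAround_X_of_ne (c : R) (i : σ) {j k : σ} (hjk : j ≠ k) :
    expandAround c i k (X j) = Polynomial.C (X j) := by
  simp [expandAround, hjk]

theorem eval_expandAround (c : R) (i k : σ) (p : MvPolynomial σ R) :
    (expandAround c i k p).eval (X k - C c * X i) = p := by
  induction p using MvPolynomial.induction_on with
  | C a => simp [expandAround]
  | add p q hp hq => simp [hp, hq]
  | mul_X p j hp =>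
    obtain rfl | hjk := eq_or_ne j k
    · simp [hp]
    · simp [hp, hjk]

theorem pow_dvd_of_X_pow_dvd_expandAround {c : R} {i k : σ} {m : ℕ} {p : MvPolynomial σ R}
    (h : Polynomial.X ^ m ∣ expandAround c i k p) : (X k - C c * X i) ^ m ∣ p := by
  obtain ⟨q, hq⟩ := h
  have h := congrArg (Polynomial.eval (X k - C c * X i)) hq
  rw [eval_expandAround, Polynomial.eval_mul, Polynomial.eval_pow, Polynomial.eval_X] at h
  exact ⟨_, h⟩

theorem X_sub_C_mul_X_not_dvd {c c' : R} (hcc' : c ≠ c') {i k : σ} (hik : i ≠ k) :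
    ¬(X k - C c * X i : MvPolynomial σ R) ∣ X k - C c' * X i := by
  intro h
  have h' := Polynomial.X_dvd_iff.1 <| by simpa [hik] using map_dvd (expandAround c i k) h
  simp [C_mul_X_eq_monomial, monomial_eq_monomial_iff, sub_eq_zero] at h'
  exact hcc' (h'.elim id fun h => h.1.trans h.2.symm)

end MvPolynomial

open MvPolynomial (expandAround pow_dvd_of_X_pow_dvd_expandAround prime_X_sub_C_mul_X
  X_sub_C_mul_X_not_dvd)

section Burst

variable {F : Type*} [Field F] {ℓ r : ℕ} {α : F} {μ : Fin (ℓ + 1) → ℕ}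

def blockStart (μ : Fin (ℓ + 1) → ℕ) (b : Fin (ℓ + 1)) : ℕ :=
  ∑ k ∈ Iio b, μ k

theorem blockStart_add_eq (b : Fin (ℓ + 1)) : blockStart μ b + μ b = ∑ k ∈ Iic b, μ k := by
  rw [blockStart, ← Iio_insert, sum_insert notMem_Iio_self, add_comm]

theorem blockStart_add_le_of_lt {b b' : Fin (ℓ + 1)} (h : b < b') :
    blockStart μ b + μ b ≤ blockStart μ b' := by
  rw [blockStart_add_eq]
  exact sum_le_sum_of_subset fun x hx => mem_Iio.2 ((mem_Iic.1 hx).trans_lt h)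

theorem blockStart_add_le (hsum : ∑ b, μ b = r) (b : Fin (ℓ + 1)) : blockStart μ b + μ b ≤ r := by
  rw [blockStart_add_eq, ← hsum]
  exact sum_le_sum_of_subset (subset_univ _)

theorem burstA_shiftedCoeffRows (hsum : ∑ b, μ b = r) (b : Fin (ℓ + 1)) :
    (burstA F ℓ r α μ).ShiftedCoeffRows (blockStart μ b) (μ b) (burstM F ℓ r α μ b) where
  add_le := blockStart_add_le hsum b
  apply_eq s hs hs' j := by
    have hstart : ∀ c, ∑ k ∈ Iio c, μ k = blockStart μ c := fun _ => rfl
    simp only [burstA, Matrix.of_apply, hstart]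
    rw [sum_eq_single b, coeff_X_pow_mul']
    · by_cases hsj : s - blockStart μ b ≤ j
      · rw [if_pos ⟨hs, hs', hsj⟩, if_pos hsj]
      · rw [if_neg fun h => hsj h.2.2, if_neg hsj]
    · refine fun c _ hcb => if_neg fun ⟨h, h', _⟩ => ?_
      rcases lt_or_gt_of_ne hcb with hlt | hlt
      · have := blockStart_add_le_of_lt (μ := μ) hlt; omega
      · have := blockStart_add_le_of_lt (μ := μ) hlt; omega
    · exact fun h => (h (mem_univ b)).elim

theorem map_constantCoeff_map_expandAround_burstM_self (t : ℕ) (i k : Fin (ℓ + 1)) :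
    ((burstM F ℓ r α μ k).map (expandAround (α ^ t) i k).toRingHom).map constantCoeff
      = ∏ j ∈ Ico t (t + (r - μ k)), (X - C (MvPolynomial.C (α ^ j) * MvPolynomial.X i)) := by
  rw [prod_Ico_eq_prod_range, add_tsub_cancel_left, burstM, Polynomial.map_prod,
    Polynomial.map_prod]
  refine prod_congr rfl fun j _ => ?_
  simp [pow_add, mul_comm, mul_assoc]

theorem map_constantCoeff_map_expandAround_burstM_of_ne (c : F) {i k : Fin (ℓ + 1)}
    (hik : i ≠ k) :
    ((burstM F ℓ r α μ i).map (expandAround c i k).toRingHom).map constantCoeff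
      = burstM F ℓ r α μ i := by
  rw [burstM, Polynomial.map_prod, Polynomial.map_prod]
  refine prod_congr rfl fun j _ => ?_
  simp [hik]

theorem X_pow_dvd_expandAround_det_burstA (hsum : ∑ b, μ b = r) {i k : Fin (ℓ + 1)}
    (hik : i ≠ k) {t : ℕ} (ht : t < μ k) :
    (X : (MvPolynomial (Fin (ℓ + 1)) F)[X]) ^ min (μ i) (μ k - t) ∣
      expandAround (α ^ t) i k (burstA F ℓ r α μ).det := by
  set m := min (μ i) (μ k - t)
  let ψ := (expandAround (α ^ t) i k).toRingHom
  let L : ℕ → (MvPolynomial (Fin (ℓ + 1)) F)[X] :=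
    fun j => X - C (MvPolynomial.C (α ^ j) * MvPolynomial.X i)
  have hL : ∀ s : Finset ℕ, (∏ j ∈ s, L j).Monic ∧ (∏ j ∈ s, L j).natDegree = s.card :=
    fun s => ⟨monic_prod_of_monic _ _ fun j _ => monic_X_sub_C _,
      natDegree_finsetProd_X_sub_C_eq_card _ _⟩
  have hdisj : blockStart μ k + μ k ≤ blockStart μ i ∨ blockStart μ i + μ i ≤ blockStart μ k :=
    (lt_or_gt_of_ne hik).symm.imp blockStart_add_le_of_lt blockStart_add_le_of_lt
  have hμik : μ i + μ k ≤ r := by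
    have := blockStart_add_le hsum i; have := blockStart_add_le hsum k; omega
  -- modulo `ε` the two blocks share the factor `∏_{t ≤ j < c} L j`; `Q` and `P` are its cofactors
  set c := t + (r - μ i - μ k) + m
  let Q := (∏ j ∈ range t, L j) * ∏ j ∈ Ico c (r - μ i), L j
  let P := ∏ j ∈ Ico c (t + (r - μ k)), L j
  have hQ : Q.Monic := (hL _).1.mul (hL _).1
  have hQdeg : Q.natDegree = μ k - m := by
    rw [(hL _).1.natDegree_mul (hL _).1, (hL _).2, (hL _).2, card_range, Nat.card_Ico]; omega
  have hPdeg : P.natDegree = μ i - m := by rw [(hL _).2, Nat.card_Ico]; omega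
  have hrel : Q * ∏ j ∈ Ico t (t + (r - μ k)), L j = P * burstM F ℓ r α μ i :=
    prod_range_mul_prod_Ico_mul_prod_Ico L (by omega) (by omega) (by omega)
  have hmapC : ∀ W : (MvPolynomial (Fin (ℓ + 1)) F)[X], (W.map C).map constantCoeff = W := fun W => by
    rw [Polynomial.map_map,
      show constantCoeff.comp C = RingHom.id _ from RingHom.ext fun _ => coeff_C_zero,
      Polynomial.map_id]
  clear_value Q P
  rw [AlgHom.map_det]
  refine Matrix.pow_dvd_det_of_shiftedCoeffRows X ((burstA_shiftedCoeffRows hsum k).map ψ)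
    ((burstA_shiftedCoeffRows hsum i).map ψ) hdisj (hQ.map C)
    (by rw [natDegree_map_eq_of_injective C_injective, hQdeg]; omega)
    (by rw [natDegree_map_eq_of_injective C_injective, hPdeg]; omega) fun j => ?_
  rw [X_dvd_iff, ← constantCoeff_apply, ← coeff_map, Polynomial.map_sub, Polynomial.map_mul,
    Polynomial.map_mul, hmapC, hmapC, map_constantCoeff_map_expandAround_burstM_self,
    map_constantCoeff_map_expandAround_burstM_of_ne _ hik, hrel, sub_self, coeff_zero]

end Burst

theorem generalized_resultant_factor_general (F : Type*) [Field F]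
    (ℓ r : ℕ) (α : F) (hord : r ≤ orderOf α)
    (μ : Fin (ℓ + 1) → ℕ) (hsum : ∑ i, μ i = r) :
    ∀ i k : Fin (ℓ + 1), i ≠ k →
      (∏ t ∈ Finset.range (μ k),
          (MvPolynomial.X k - MvPolynomial.C (α ^ t) * MvPolynomial.X i) ^
            (min (μ i) (μ k - t))) ∣
        (burstA F ℓ r α μ).det := by
  intro i k hik
  have hμk : μ k ≤ r := hsum ▸ single_le_sum (fun _ _ => Nat.zero_le _) (mem_univ k)
  have hpow_inj : ∀ t ∈ range (μ k), ∀ u ∈ range (μ k), α ^ t = α ^ u → t = u :=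
    fun t ht u hu => pow_injOn_Iio_orderOf (x := α) (Set.mem_Iio.2 (by rw [mem_range] at ht; omega))
      (Set.mem_Iio.2 (by rw [mem_range] at hu; omega))
  refine prod_pow_dvd_of_prime (fun t _ => prime_X_sub_C_mul_X _ hik)
    (fun t ht u hu htu => X_sub_C_mul_X_not_dvd (fun h => htu (hpow_inj t ht u hu h)) hik)
    fun t ht => pow_dvd_of_X_pow_dvd_expandAround
      (X_pow_dvd_expandAround_det_burstA hsum hik (mem_range.1 ht))

/-- For every pair of distinct indices `i ≠ k`, the
multivariate polynomial `Δ(β) = det A(β)` is divisible in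
`F[β_0, …, β_ℓ]` by `Π_{t=0}^{μ_k-1} (β_k - β_i α^t)^{min(μ_i, μ_k - t)}`. -/
theorem generalized_resultant_factor (F : Type*) [Field F] [Fintype F]
    (ℓ r : ℕ) (hr : 1 ≤ r) (α : F) (hα : α ≠ 0) (hord : r ≤ orderOf α)
    (μ : Fin (ℓ + 1) → ℕ) (hμ : ∀ i, 1 ≤ μ i) (hsum : ∑ i, μ i = r) :
    ∀ i k : Fin (ℓ + 1), i ≠ k →
      (∏ t ∈ Finset.range (μ k),
          (MvPolynomial.X k - MvPolynomial.C (α ^ t) * MvPolynomial.X i) ^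
            (min (μ i) (μ k - t))) ∣
        (burstA F ℓ r α μ).det :=
  generalized_resultant_factor_general F ℓ r α hord μ hsum
end

section
/- Let F = GF(q), let α ∈ F have multiplicative order n, let 0 < r < n, and let C_RS(n,r) be the [n, n−r] Reed–Solomon code over F with parity-check matrix H = (α^{sj}) for 0 ≤ s ≤ r−1, 0 ≤ j ≤ n−1. If ℓ and τ are positive integers with r ≥ τ + ⌈τ/ℓ⌉, then there is an (ℓ,τ)-burst list decoder for C_RS(n,r); equivalently, there do not exist ℓ+1 distinct τ-bursts e_0, e_1, …, e_ℓ ∈ F^n with equal syndromes H·e_0^T = H·e_1^T = ⋯ = H·e_ℓ^T. Hence Reed–Solomon codes attain the generalized Reiger bound r ≥ τ + ⌈τ/ℓ⌉ for linear codes. -/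
/-! A nonzero `τ`-burst has word polynomial `X ^ a * B` with `B 0 ≠ 0` and `deg B < τ`, so its
syndrome is `Sₛ = αˢᵃ B(αˢ)`. Given `ℓ + 1` distinct bursts with a common syndrome `S`, put
`f = ∑ₛ Sₛ / ∏_{t ≠ s} (αˢ - αᵗ) Xˢ`, a nonzero polynomial of degree `< r`. Its value at
`α⁻ᵃⁱ αᵐ` is the top coefficient of the Lagrange interpolant of `Xᵐ Bᵢ` on the nodes `αˢ`,
which vanishes for `m < r - τ`. These `(ℓ + 1)(r - τ)` roots are distinct: a coincidence
`αᵃⁱ = αᵃᵏ⁺ᵈ` with `d < r - τ` makes `Xᵈ Bᵢ - Bₖ` vanish at all `r` nodes, forcing `i = k`.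
Hence `r > (ℓ + 1)(r - τ)`, which contradicts `r ≥ τ + ⌈τ / ℓ⌉`. -/

open Polynomial Finset

namespace Polynomial

variable {R : Type*} [Semiring R] [DecidableEq R]

lemma eval_ofFn {n : ℕ} (v : Fin n → R) (x : R) :
    (ofFn n v).eval x = ∑ j, v j * x ^ (j : ℕ) := by
  simp [ofFn_eq_sum_monomial, eval_finsetSum, eval_monomial]

lemma exists_ne_zero_of_coeff_ofFn_ne_zero {n i : ℕ} {v : Fin n → R}
    (h : (ofFn n v).coeff i ≠ 0) : ∃ hi : i < n, v ⟨i, hi⟩ ≠ 0 := by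
  by_cases hi : i < n
  · exact ⟨hi, by rwa [ofFn_coeff_eq_val_of_lt v hi] at h⟩
  · exact absurd (ofFn_coeff_eq_zero_of_ge v (not_lt.mp hi)) h

end Polynomial

lemma mulVec_pow_mul_eq_eval_ofFn {R : Type*} [CommSemiring R] [DecidableEq R] {r n : ℕ}
    (α : R) (e : Fin n → R) (s : Fin r) :
    Matrix.mulVec (Matrix.of fun (s : Fin r) (j : Fin n) => α ^ ((s : ℕ) * (j : ℕ))) e s =
      (ofFn n e).eval (α ^ (s : ℕ)) := by
  simp only [Matrix.mulVec, dotProduct, Matrix.of_apply, eval_ofFn, pow_mul, mul_comm]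

theorem IsBurst.exists_ofFn_eq_X_pow_mul {R : Type*} [Semiring R] [DecidableEq R] {n τ : ℕ}
    {e : Fin n → R} (he : IsBurst τ e) (he0 : e ≠ 0) :
    ∃ a < n, ∃ B : R[X], ofFn n e = X ^ a * B ∧ B.natDegree < τ ∧ B.coeff 0 ≠ 0 := by
  obtain ⟨w, hw⟩ := he
  have : Nontrivial R := let ⟨j, hj⟩ := Function.ne_iff.mp he0; nontrivial_of_ne _ _ hj
  set P := ofFn n e
  have hP : P ≠ 0 := fun h => he0 (injective_ofFn n (h.trans (ofFn_zero n).symm))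
  have hwindow : ∀ j, P.coeff j ≠ 0 → j < n ∧ w ≤ j ∧ j < w + τ := fun j hj => by
    obtain ⟨hjn, hj⟩ := exists_ne_zero_of_coeff_ofFn_ne_zero hj
    exact ⟨hjn, hw ⟨j, hjn⟩ hj⟩
  obtain ⟨B, hPB⟩ : X ^ P.natTrailingDegree ∣ P :=
    X_pow_dvd_iff.mpr fun d hd => coeff_eq_zero_of_lt_natTrailingDegree hd
  have hB : B ≠ 0 := by
    rintro rfl
    exact hP (by rw [hPB, mul_zero])
  have hlow := hwindow _ (trailingCoeff_nonzero_iff_nonzero.mpr hP)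
  have hhigh := hwindow _ (leadingCoeff_ne_zero.mpr hP)
  have hdeg := natDegree_X_pow_mul P.natTrailingDegree hB
  rw [← hPB] at hdeg
  refine ⟨P.natTrailingDegree, hlow.1, B, hPB, by omega, ?_⟩
  have hcoeff := coeff_X_pow_mul B P.natTrailingDegree 0
  rw [zero_add, ← hPB] at hcoeff
  exact hcoeff ▸ trailingCoeff_nonzero_iff_nonzero.mpr hP

lemma Lagrange.sum_eval_div_prod_sub_eq_zero {F ι : Type*} [Field F] [DecidableEq ι]
    {s : Finset ι} {v : ι → F} (hvs : Set.InjOn v s) {P : F[X]} (hP : P.natDegree + 1 < #s) :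
    ∑ i ∈ s, P.eval (v i) / ∏ j ∈ s.erase i, (v i - v j) = 0 := by
  rw [← Lagrange.coeff_eq_sum hvs (degree_le_natDegree.trans_lt (by exact_mod_cast (by omega)))]
  exact coeff_eq_zero_of_natDegree_lt (by omega)

section Syndromes

variable {F : Type*} [Field F] {α : F} {r : ℕ}

lemma injective_pow_fin_of_le_orderOf (hr : r ≤ orderOf α) :
    Function.Injective fun s : Fin r => α ^ (s : ℕ) := fun s t hst =>
  Fin.ext (pow_injOn_Iio_orderOf (s.2.trans_le hr) (t.2.trans_le hr) hst)

lemma eq_zero_of_eval_pow_eq_zero (hr : r ≤ orderOf α) {Q : F[X]} (hQ : Q.natDegree < r)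
    (h : ∀ s : Fin r, Q.eval (α ^ (s : ℕ)) = 0) : Q = 0 :=
  eq_zero_of_natDegree_lt_card_of_eval_eq_zero Q (injective_pow_fin_of_le_orderOf hr) h
    (by rwa [Fintype.card_fin])

lemma exists_eval_X_pow_mul_ne_zero (hα : α ≠ 0) (hr : r ≤ orderOf α) (a : ℕ) {B : F[X]}
    (hB : B.natDegree < r) (hB0 : B ≠ 0) : ∃ s : Fin r, (X ^ a * B).eval (α ^ (s : ℕ)) ≠ 0 := by
  by_contra! h
  refine hB0 (eq_zero_of_eval_pow_eq_zero hr hB fun s => ?_)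
  simpa [hα] using h s

lemma eq_of_eval_X_pow_mul_eq (hα : α ≠ 0) (hr : r ≤ orderOf α) {τ a b d : ℕ} {B B' : F[X]}
    (ha : a < orderOf α) (hb : b < orderOf α) (hB : B.natDegree < τ) (hB' : B'.natDegree < τ)
    (hB0' : B'.coeff 0 ≠ 0) (hd : d + τ ≤ r) (hshift : α ^ a = α ^ b * α ^ d)
    (hS : ∀ s : Fin r, (X ^ a * B).eval (α ^ (s : ℕ)) = (X ^ b * B').eval (α ^ (s : ℕ))) :
    d = 0 ∧ a = b ∧ B = B' := by
  have hQ : X ^ d * B - B' = 0 := by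
    refine eq_zero_of_eval_pow_eq_zero hr ?_ fun s => ?_
    · refine (natDegree_sub_le _ _).trans_lt (max_lt ?_ (by omega))
      exact (natDegree_mul_le_of_le (natDegree_X_pow_le d) (le_refl B.natDegree)).trans_lt
        (by omega)
    · have hx : (α ^ (s : ℕ)) ^ a = (α ^ (s : ℕ)) ^ b * (α ^ (s : ℕ)) ^ d := by
        rw [pow_right_comm, hshift, mul_pow, pow_right_comm α b, pow_right_comm α d]
      have h := hS s
      simp only [eval_mul, eval_pow, eval_X] at h
      simp only [eval_sub, eval_mul, eval_pow, eval_X]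
      refine mul_left_cancel₀ (pow_ne_zero b (pow_ne_zero (s : ℕ) hα)) ?_
      linear_combination h - B.eval (α ^ (s : ℕ)) * hx
  rw [sub_eq_zero] at hQ
  have hd0 : d = 0 := by
    by_contra hd0
    have hcoeff := congrArg (coeff · 0) hQ
    simp only [coeff_X_pow_mul', Nat.le_zero, if_neg hd0] at hcoeff
    exact hB0' hcoeff.symm
  subst hd0
  rw [pow_zero, one_mul] at hQ
  rw [pow_zero, mul_one] at hshift
  exact ⟨rfl, pow_injOn_Iio_orderOf ha hb hshift, hQ⟩

variable [DecidableEq F]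

theorem IsBurst.eq_zero_of_eval_pow_eq_zero (hα : α ≠ 0) (hr : r ≤ orderOf α) {n τ : ℕ}
    (hτ : τ ≤ r) {e : Fin n → F} (he : IsBurst τ e)
    (h : ∀ s : Fin r, (ofFn n e).eval (α ^ (s : ℕ)) = 0) : e = 0 := by
  by_contra he0
  obtain ⟨a, -, B, hPB, hB, hB0⟩ := he.exists_ofFn_eq_X_pow_mul he0
  obtain ⟨s, hs⟩ := exists_eval_X_pow_mul_ne_zero hα hr a (hB.trans_le hτ)
    (fun h0 => hB0 (h0 ▸ coeff_zero 0))
  exact hs (hPB ▸ h s)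

noncomputable def weightedSyndromePoly (α : F) (S : Fin r → F) : F[X] :=
  ofFn r fun s => S s / ∏ t ∈ univ.erase s, (α ^ (s : ℕ) - α ^ (t : ℕ))

lemma weightedSyndromePoly_ne_zero (hr : r ≤ orderOf α) {S : Fin r → F} (hS : S ≠ 0) :
    weightedSyndromePoly α S ≠ 0 := by
  obtain ⟨s, hs⟩ := Function.ne_iff.mp hS
  intro h
  have hcoeff := congrArg (coeff · s) h
  simp only [weightedSyndromePoly, ofFn_coeff_eq_val_of_lt _ s.2, coeff_zero] at hcoeff
  refine div_ne_zero hs (prod_ne_zero_iff.mpr fun t ht => sub_ne_zero.mpr fun hst => ?_) hcoeff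
  exact (mem_erase.mp ht).1 (injective_pow_fin_of_le_orderOf hr hst).symm

lemma natDegree_weightedSyndromePoly_lt (S : Fin r → F) (h : weightedSyndromePoly α S ≠ 0) :
    (weightedSyndromePoly α S).natDegree < r :=
  (natDegree_lt_iff_degree_lt h).mpr (ofFn_degree_lt _)

lemma eval_weightedSyndromePoly_eq_zero (hα : α ≠ 0) (hr : r ≤ orderOf α) {S : Fin r → F}
    {a m : ℕ} {B : F[X]} (hS : ∀ s : Fin r, S s = (X ^ a * B).eval (α ^ (s : ℕ)))
    (hm : m + B.natDegree + 1 < r) :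
    (weightedSyndromePoly α S).eval ((α ^ a)⁻¹ * α ^ m) = 0 := by
  rw [weightedSyndromePoly, eval_ofFn]
  have hP : (X ^ m * B).natDegree + 1 < #(univ : Finset (Fin r)) := by
    rw [card_univ, Fintype.card_fin]
    have := natDegree_mul_le_of_le (natDegree_X_pow_le m) (le_refl B.natDegree)
    omega
  rw [← Lagrange.sum_eval_div_prod_sub_eq_zero (injective_pow_fin_of_le_orderOf hr).injOn hP]
  refine sum_congr rfl fun s _ => ?_
  simp only [hS, eval_mul, eval_pow, eval_X]
  rw [mul_pow, inv_pow, pow_right_comm α (s : ℕ) a, pow_right_comm α m]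
  field_simp

theorem card_mul_sub_lt_of_eval_X_pow_mul_eq {ι : Type*} [Fintype ι] [Nonempty ι]
    (hα : α ≠ 0) (hr : r ≤ orderOf α) {τ : ℕ} (hτ : τ ≤ r) {a : ι → ℕ} {B : ι → F[X]}
    (ha : ∀ i, a i < orderOf α) (hB : ∀ i, (B i).natDegree < τ) (hB0 : ∀ i, (B i).coeff 0 ≠ 0)
    (hinj : Function.Injective fun i => X ^ a i * B i)
    (hS : ∀ i k (s : Fin r),
      (X ^ a i * B i).eval (α ^ (s : ℕ)) = (X ^ a k * B k).eval (α ^ (s : ℕ))) :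
    Fintype.card ι * (r - τ) < r := by
  obtain ⟨i₀⟩ := ‹Nonempty ι›
  set S : Fin r → F := fun s => (X ^ a i₀ * B i₀).eval (α ^ (s : ℕ))
  have hS0 : S ≠ 0 := fun h => by
    obtain ⟨s, hs⟩ := exists_eval_X_pow_mul_ne_zero hα hr (a i₀) ((hB i₀).trans_le hτ)
      (fun h0 => hB0 i₀ (h0 ▸ coeff_zero 0))
    exact hs (congrFun h s)
  have hf := weightedSyndromePoly_ne_zero hr hS0
  have hroot : ∀ p : ι × Fin (r - τ),
      (weightedSyndromePoly α S).eval ((α ^ a p.1)⁻¹ * α ^ (p.2 : ℕ)) = 0 := fun ⟨i, m⟩ =>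
    eval_weightedSyndromePoly_eq_zero hα hr (fun s => hS i₀ i s) (by have := hB i; omega)
  have hshift_eq : ∀ i k (m d : ℕ), m + d < r - τ →
      (α ^ a i)⁻¹ * α ^ (m + d) = (α ^ a k)⁻¹ * α ^ m → i = k ∧ d = 0 := by
    intro i k m d hmd h
    have hshift : α ^ a i = α ^ a k * α ^ d := by
      rw [pow_add] at h
      field_simp at h
      linear_combination -h
    obtain ⟨hd, hak, hBk⟩ := eq_of_eval_X_pow_mul_eq hα hr (ha i) (ha k) (hB i) (hB k)
      (hB0 k) (by omega : d + τ ≤ r) hshift (hS i k)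
    exact ⟨hinj (by simp only [hak, hBk]), hd⟩
  have hroot_inj :
      Function.Injective fun p : ι × Fin (r - τ) => (α ^ a p.1)⁻¹ * α ^ (p.2 : ℕ) := by
    rintro ⟨i, m⟩ ⟨k, m'⟩ h
    rcases le_total (m' : ℕ) m with hle | hle
    · obtain ⟨d, hd⟩ := Nat.exists_eq_add_of_le hle
      obtain ⟨rfl, rfl⟩ := hshift_eq i k m' d (hd ▸ m.2) (hd ▸ h)
      exact Prod.ext rfl (Fin.ext hd)
    · obtain ⟨d, hd⟩ := Nat.exists_eq_add_of_le hle
      obtain ⟨rfl, rfl⟩ := hshift_eq k i m d (hd ▸ m'.2) (hd ▸ h.symm)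
      exact Prod.ext rfl (Fin.ext hd.symm)
  have hdeg := natDegree_weightedSyndromePoly_lt S hf
  by_contra! hcard
  refine hf (eq_zero_of_natDegree_lt_card_of_eval_eq_zero _ hroot_inj hroot ?_)
  rw [Fintype.card_prod, Fintype.card_fin]
  omega

end Syndromes

lemma le_succ_mul_sub_of_add_div_le {ℓ τ r : ℕ} (hℓ : 1 ≤ ℓ) (h : τ + (τ + ℓ - 1) / ℓ ≤ r) :
    r ≤ (ℓ + 1) * (r - τ) := by
  have hceil : τ ≤ ℓ * ((τ + ℓ - 1) / ℓ) := by
    have := Nat.lt_div_mul_add (a := τ + ℓ - 1) hℓ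
    rw [mul_comm]
    omega
  have : ℓ * ((τ + ℓ - 1) / ℓ) ≤ ℓ * (r - τ) := Nat.mul_le_mul_left ℓ (by omega)
  rw [add_mul, one_mul]
  omega

theorem RS_attains_Reiger_general (F : Type*) [Field F] (n r τ ℓ : ℕ)
    (α : F) (hord : orderOf α = n) (hrn : r < n)
    (hℓ : 1 ≤ ℓ) (hbound : τ + (τ + ℓ - 1) / ℓ ≤ r) :
    ¬ ∃ e : Fin (ℓ + 1) → (Fin n → F), Function.Injective e ∧
        (∀ i, IsBurst τ (e i)) ∧
        ∀ i k, Matrix.mulVec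
              (Matrix.of fun (s : Fin r) (j : Fin n) => α ^ ((s : ℕ) * (j : ℕ)))
              (e i) =
            Matrix.mulVec
              (Matrix.of fun (s : Fin r) (j : Fin n) => α ^ ((s : ℕ) * (j : ℕ)))
              (e k) := by
  rintro ⟨e, he_inj, he_burst, he_syn⟩
  classical
  have hα : α ≠ 0 := by
    rintro rfl
    rw [orderOf_zero] at hord
    omega
  have hr : r ≤ orderOf α := hord ▸ hrn.le
  have hτ : τ ≤ r := (Nat.le_add_right _ _).trans hbound
  have hsyn : ∀ i k (s : Fin r),
      (ofFn n (e i)).eval (α ^ (s : ℕ)) = (ofFn n (e k)).eval (α ^ (s : ℕ)) := fun i k s => by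
    simpa only [mulVec_pow_mul_eq_eval_ofFn] using congrFun (he_syn i k) s
  have he0 : ∀ i, e i ≠ 0 := by
    have : Nontrivial (Fin (ℓ + 1)) := Fin.nontrivial_iff_two_le.mpr (by omega)
    intro i hi
    obtain ⟨k, hki⟩ := exists_ne i
    have hk0 := (he_burst k).eq_zero_of_eval_pow_eq_zero hα hr hτ fun s => by
      rw [hsyn k i, hi, map_zero, eval_zero]
    exact hki (he_inj (hk0.trans hi.symm))
  choose a ha B hPB hB hB0 using fun i => (he_burst i).exists_ofFn_eq_X_pow_mul (he0 i)
  have hcard := card_mul_sub_lt_of_eval_X_pow_mul_eq hα hr hτ (fun i => hord ▸ ha i) hB hB0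
    (fun i k h => he_inj (injective_ofFn n (by simpa only [hPB] using h)))
    (fun i k s => by simpa only [hPB] using hsyn i k s)
  rw [Fintype.card_fin] at hcard
  exact hcard.not_ge (le_succ_mul_sub_of_add_div_le hℓ hbound)

/-- Reed–Solomon codes attain the generalized Reiger bound.
Let `F = GF(q)`, let `α ∈ F` have multiplicative order `n`, let `0 < r < n`,
and let `H = (α^{sj})` (`0 ≤ s < r`, `0 ≤ j < n`) be the parity-check matrix of
the `[n, n-r]` Reed–Solomon code. If `ℓ, τ ≥ 1` and `r ≥ τ + ⌈τ/ℓ⌉`, then the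
code has an `(ℓ,τ)`-burst list decoder: there do not exist `ℓ+1` distinct
`τ`-bursts in `F^n` with equal syndromes. -/
theorem RS_attains_Reiger (F : Type*) [Field F] [Fintype F] (n r τ ℓ : ℕ)
    (α : F) (hord : orderOf α = n) (hr0 : 0 < r) (hrn : r < n)
    (hτ : 1 ≤ τ) (hℓ : 1 ≤ ℓ) (hbound : τ + (τ + ℓ - 1) / ℓ ≤ r) :
    ¬ ∃ e : Fin (ℓ + 1) → (Fin n → F), Function.Injective e ∧
        (∀ i, IsBurst τ (e i)) ∧
        ∀ i k, Matrix.mulVec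
              (Matrix.of fun (s : Fin r) (j : Fin n) => α ^ ((s : ℕ) * (j : ℕ)))
              (e i) =
            Matrix.mulVec
              (Matrix.of fun (s : Fin r) (j : Fin n) => α ^ ((s : ℕ) * (j : ℕ)))
              (e k) :=
  RS_attains_Reiger_general F n r τ ℓ α hord hrn hℓ hbound
end
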